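/- arXiv:2306.13365 — 8 statements merged into one kernel-verified Lean document; each statement's English description precedes it below -/
import Mathlib

section
/- Let p be an odd prime, G cyclic of order p with generator tau, and i >= 2. Let F_i be the cyclic group Z/p^i Z with tau acting as multiplication by a unit w = 1 + p^{i-1} z with z not divisible by p. Then the Tate cohomology group H^0_hat(G, F_i) and the cohomology group H^1(G, F_i) both vanish. -/
/-!
Write `w = 1 + ε` with `ε = p^(i-1) z`. Since `i ≥ 2` we have `ε² = 0` and `p ε = 0`, so
`w^k = 1 + k ε` and `N = p + (p(p-1)/2) ε = p`, using that `p` is odd. As `z` is a unit, the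
fixed points (`ε x = 0`) are the multiples of `p = N`, and the kernel of `N` (`p x = 0`) consists of
the multiples of `p^(i-1)`, which are the multiples of `ε = w - 1`.
-/

open Finset

section SquareZero

variable {R : Type*} [CommRing R] {ε : R}

theorem one_add_pow_of_sq_eq_zero (hε : ε ^ 2 = 0) (k : ℕ) : (1 + ε) ^ k = 1 + k * ε := by
  induction k with
  | zero => simp
  | succ k ih =>
    rw [pow_succ, ih]
    push_cast
    linear_combination (k : R) * hε

theorem sum_range_one_add_pow_of_sq_eq_zero (hε : ε ^ 2 = 0) (n : ℕ) :
    ∑ k ∈ range n, (1 + ε) ^ k = n + (∑ k ∈ range n, k : ℕ) * ε := by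
  simp only [one_add_pow_of_sq_eq_zero hε, sum_add_distrib, sum_const, card_range,
    nsmul_eq_mul, mul_one, Nat.cast_sum, sum_mul]

theorem sum_range_one_add_pow_of_odd {n : ℕ} (hn : Odd n) (hε : ε ^ 2 = 0)
    (hnε : (n : R) * ε = 0) : ∑ k ∈ range n, (1 + ε) ^ k = n := by
  obtain ⟨m, rfl⟩ := hn
  have hsum : ∑ k ∈ range (2 * m + 1), k = (2 * m + 1) * m := by
    have := sum_range_id_mul_two (2 * m + 1)
    rw [Nat.add_sub_cancel] at this
    linarith
  rw [sum_range_one_add_pow_of_sq_eq_zero hε, hsum, Nat.cast_mul, mul_right_comm, hnε,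
    zero_mul, add_zero]

end SquareZero

namespace ZMod

theorem isUnit_intCast_of_isCoprime {n : ℕ} {z : ℤ} (h : IsCoprime z n) : IsUnit (z : ZMod n) := by
  have := h.map (Int.castRingHom (ZMod n))
  rw [eq_intCast, eq_intCast, Int.cast_natCast, natCast_self] at this
  exact isCoprime_zero_right.mp this

theorem exists_eq_mul_of_mul_eq_zero {n a b : ℕ} (ha : a ≠ 0) (hab : a * b = n) {x : ZMod n}
    (h : (a : ZMod n) * x = 0) : ∃ y : ZMod n, x = b * y := by
  have hdvd : ((a * b : ℕ) : ℤ) ∣ a * (x.cast : ℤ) := by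
    rw [hab, ← intCast_zmod_eq_zero_iff_dvd]
    push_cast
    exact h
  push_cast at hdvd
  obtain ⟨c, hc⟩ := (mul_dvd_mul_iff_left (by exact_mod_cast ha)).mp hdvd
  exact ⟨c, by rw [← intCast_zmod_cast x, hc]; push_cast; rfl⟩

end ZMod

theorem stmt_3 (p i : ℕ) [Fact p.Prime] (hp : Odd p) (hi : 2 ≤ i)
    (z : ℤ) (hz : ¬ (p : ℤ) ∣ z)
    (w : ZMod (p ^ i)) (hw : w = 1 + (p : ZMod (p ^ i)) ^ (i - 1) * (z : ZMod (p ^ i)))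
    (N : ZMod (p ^ i)) (hN : N = ∑ k ∈ Finset.range p, w ^ k) :
    (∀ x : ZMod (p ^ i), w * x = x → ∃ y : ZMod (p ^ i), x = N * y) ∧
    (∀ x : ZMod (p ^ i), N * x = 0 → ∃ y : ZMod (p ^ i), x = w * y - y) := by
  have hp0 : p ≠ 0 := (Fact.out : p.Prime).ne_zero
  have hpi : (p : ZMod (p ^ i)) ^ i = 0 := by rw [← Nat.cast_pow, ZMod.natCast_self]
  set q := (p : ZMod (p ^ i)) ^ (i - 1)
  have hpq : (p : ZMod (p ^ i)) * q = 0 := by rwa [← pow_succ', Nat.sub_add_cancel (by omega)]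
  have hqq : q ^ 2 = 0 := by rw [← pow_mul]; exact pow_eq_zero_of_le (by omega) hpi
  have hzu : IsUnit (z : ZMod (p ^ i)) := ZMod.isUnit_intCast_of_isCoprime <| by
    push_cast
    exact ((Nat.prime_iff_prime_int.mp Fact.out).coprime_iff_not_dvd.mpr hz).symm.pow_right
  have hNp : N = p := by
    rw [hN, hw]
    exact sum_range_one_add_pow_of_odd hp (by linear_combination (z : ZMod (p ^ i)) ^ 2 * hqq)
      (by linear_combination (z : ZMod (p ^ i)) * hpq)
  refine ⟨fun x hx => ?_, fun x hx => ?_⟩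
  · have hqx : q * x = 0 := hzu.mul_right_eq_zero.mp <| by linear_combination hx - x * hw
    obtain ⟨y, rfl⟩ := ZMod.exists_eq_mul_of_mul_eq_zero (pow_ne_zero (i - 1) hp0)
      (pow_sub_one_mul (by omega) p) (by rwa [Nat.cast_pow])
    exact ⟨y, by rw [hNp]⟩
  · obtain ⟨y, rfl⟩ := ZMod.exists_eq_mul_of_mul_eq_zero hp0 (mul_pow_sub_one (by omega) p)
      (hNp ▸ hx)
    refine ⟨(z : ZMod (p ^ i))⁻¹ * y, ?_⟩
    rw [hw, Nat.cast_pow]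
    linear_combination (-q * y) * ZMod.mul_inv_of_unit _ hzu
end

section
/- Let p be an odd prime, G cyclic of order p, and i >= 1, with F_i the cyclic group Z/p^i Z equipped with a nontrivial G-action (a generator acts by a unit w congruent to 1 mod p^{i-1}, w != 1). Then for every Z_p[G]-lattice M_f (a finitely generated Z_p-free Z_p[G]-module), Ext^1_{Z_p[G]}(M_f, F_i) = 0. -/
/-!
Choose a linear section `s₀` of `π` and let `W ∈ ℤ_p` be the integer `1 + p^(i-1) z`, which acts
on `F` as `τ` does. The failure of `s₀` to be equivariant is a map `d : M_f → F` with
`ι ∘ d = S ∘ s₀ - s₀ ∘ T`, and `s₀ + ι ∘ h` is an equivariant section as soon as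
`h ∘ T - W • h = d`. The twisted norm `N f = ∑ Wᵏ • f ∘ T^(p-1-k)` satisfies
`W • N f - N f ∘ T = (W^p - 1) • f` and kills `d`. Lifting `d` to `d̃ : M_f → ℤ_p`, the map `N d̃`
vanishes modulo `p^i`, say `N d̃ = p^i • e`. By lifting the exponent, `W^p - 1 = p^i u` with `u` a
unit, so cancelling `p^i` gives `W • e - e ∘ T = u • d̃`, and `h = -u⁻¹ • e` reduced mod `p^i`
solves the equation. For `i = 1` the hypotheses are contradictory: `w^p = 1` in `ℤ/p` forces
`w = 1` by Fermat.
-/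

open Function

theorem LinearMap.exists_comp_eq_of_range_le {R M N P : Type*} [Semiring R]
    [AddCommMonoid M] [AddCommMonoid N] [AddCommMonoid P] [Module R M] [Module R N] [Module R P]
    {f : N →ₗ[R] P} (hf : Injective f) {g : M →ₗ[R] P} (h : range g ≤ range f) :
    ∃ g' : M →ₗ[R] N, f ∘ₗ g' = g :=
  ⟨(LinearEquiv.ofInjective f hf).symm.toLinearMap ∘ₗ g.codRestrict _ fun x => h ⟨x, rfl⟩, by
    ext x
    rw [LinearMap.comp_apply, ← LinearEquiv.ofInjective_apply (h := hf)]
    simp⟩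

theorem exists_smul_eq_of_forall_dvd {R M : Type*} [CommRing R] [AddCommGroup M] [Module R M]
    {a : R} (ha : IsLeftRegular a) {f : M →ₗ[R] R} (hf : ∀ x, a ∣ f x) :
    ∃ e : M →ₗ[R] R, a • e = f := by
  obtain ⟨e, he⟩ := LinearMap.exists_comp_eq_of_range_le (f := LinearMap.mulLeft R a) ha
    (by rintro _ ⟨x, rfl⟩; obtain ⟨c, hc⟩ := hf x; exact ⟨c, hc.symm⟩)
  exact ⟨e, by rw [← he]; ext; simp⟩

section TwistedNorm

variable {R M X Y : Type*} [CommRing R] [AddCommGroup M] [Module R M]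
  [AddCommGroup X] [Module R X] [AddCommGroup Y] [Module R Y]
  (n : ℕ) (σ : Module.End R X) (T : Module.End R M)

def twistedNorm (f : M →ₗ[R] X) : M →ₗ[R] X :=
  ∑ k ∈ Finset.range n, (σ ^ k) ∘ₗ f ∘ₗ (T ^ (n - 1 - k))

theorem twistedNorm_comp_sub_comp (f : M →ₗ[R] X) :
    twistedNorm n σ T (σ ∘ₗ f - f ∘ₗ T) = (σ ^ n) ∘ₗ f - f ∘ₗ (T ^ n) := by
  have hterm : ∀ k ∈ Finset.range n, (σ ^ k) ∘ₗ (σ ∘ₗ f - f ∘ₗ T) ∘ₗ (T ^ (n - 1 - k)) =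
      (σ ^ (k + 1)) ∘ₗ f ∘ₗ (T ^ (n - (k + 1))) - (σ ^ k) ∘ₗ f ∘ₗ (T ^ (n - k)) := by
    intro k hk
    have hnk : n - k = n - 1 - k + 1 := by grind
    rw [hnk, Nat.sub_sub, add_comm 1 k, pow_succ σ, pow_succ' T]
    simp only [LinearMap.sub_comp, LinearMap.comp_sub, Module.End.mul_eq_comp, LinearMap.comp_assoc]
  rw [twistedNorm, Finset.sum_congr rfl hterm,
    Finset.sum_range_sub (fun k => (σ ^ k) ∘ₗ f ∘ₗ (T ^ (n - k)))]
  simp [Module.End.one_eq_id]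

theorem comp_twistedNorm {g : X →ₗ[R] Y} {σ' : Module.End R Y} (hg : σ' ∘ₗ g = g ∘ₗ σ)
    (f : M →ₗ[R] X) : g ∘ₗ twistedNorm n σ T f = twistedNorm n σ' T (g ∘ₗ f) := by
  ext x
  simp only [twistedNorm, LinearMap.comp_apply, LinearMap.coe_sum, Finset.sum_apply, map_sum]
  refine Finset.sum_congr rfl fun k _ => ?_
  rw [← LinearMap.comp_apply g, ← Module.End.commute_pow_left_of_commute hg, LinearMap.comp_apply]

theorem twistedNorm_comp (f : M →ₗ[R] X) :
    twistedNorm n σ T f ∘ₗ T = twistedNorm n σ T (f ∘ₗ T) := by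
  ext x
  simp only [twistedNorm, LinearMap.comp_apply, LinearMap.coe_sum, Finset.sum_apply,
    ← Module.End.mul_apply, ← pow_succ, ← pow_succ']

theorem twistedNorm_sub (f g : M →ₗ[R] X) :
    twistedNorm n σ T (f - g) = twistedNorm n σ T f - twistedNorm n σ T g := by
  simp only [twistedNorm, LinearMap.sub_comp, LinearMap.comp_sub, Finset.sum_sub_distrib]

theorem comp_twistedNorm_sub_twistedNorm_comp (f : M →ₗ[R] X) :
    σ ∘ₗ twistedNorm n σ T f - twistedNorm n σ T f ∘ₗ T = (σ ^ n) ∘ₗ f - f ∘ₗ (T ^ n) := by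
  rw [comp_twistedNorm n σ T rfl, twistedNorm_comp, ← twistedNorm_sub,
    twistedNorm_comp_sub_comp]

end TwistedNorm

section Extension

variable {R M F : Type*} [CommRing R] [AddCommGroup M] [Module R M] [Module.Projective R M]
  [AddCommGroup F] [Module R F] {n : ℕ} {a u W : R}

theorem exists_comp_sub_smul_eq_of_twistedNorm_eq_zero (ha : IsLeftRegular a) (hu : IsUnit u)
    (hW : W ^ n = 1 + a * u) {q : R →ₗ[R] F} (hq : Surjective q) (hker : ∀ c, q c = 0 → a ∣ c)
    {T : Module.End R M} (hT : T ^ n = 1) {d : M →ₗ[R] F} (hd : twistedNorm n (W • 1) T d = 0) :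
    ∃ h : M →ₗ[R] F, h ∘ₗ T - W • h = d := by
  obtain ⟨dt, hdt⟩ := Module.projective_lifting_property q d hq
  have hqN : q ∘ₗ twistedNorm n (W • 1) T dt = 0 := by
    rw [comp_twistedNorm n _ T (σ' := W • 1) (by ext; simp [← map_smul]), hdt, hd]
  obtain ⟨e, he⟩ := exists_smul_eq_of_forall_dvd ha (f := twistedNorm n (W • 1) T dt)
    fun x => hker _ (LinearMap.congr_fun hqN x)
  have htel := comp_twistedNorm_sub_twistedNorm_comp n (W • 1) T dt
  rw [← he, hT, smul_pow, one_pow, hW] at htel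
  have he' : W • e - e ∘ₗ T = u • dt := by
    ext x
    apply ha
    have := LinearMap.congr_fun htel x
    simp only [LinearMap.sub_apply, LinearMap.coe_comp, LinearMap.coe_smul, comp_apply,
      Pi.smul_apply, smul_eq_mul, Module.End.one_apply, LinearMap.smul_apply] at this ⊢
    linear_combination this
  obtain ⟨v, rfl⟩ := hu
  obtain ⟨h₀, hsol⟩ : ∃ h₀ : M →ₗ[R] R, h₀ ∘ₗ T - W • h₀ = dt := by
    refine ⟨-(↑v⁻¹ : R) • e, ?_⟩
    ext x
    have := LinearMap.congr_fun he' x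
    simp only [LinearMap.sub_apply, LinearMap.smul_apply, smul_eq_mul, LinearMap.coe_comp,
      comp_apply, LinearMap.coe_smul, neg_smul, Pi.neg_apply, Pi.smul_apply, neg_mul, mul_neg,
      sub_neg_eq_add] at this ⊢
    linear_combination (↑v⁻¹ : R) * this + dt x * v.inv_mul
  exact ⟨q ∘ₗ h₀, by rw [← hdt, ← hsol, LinearMap.comp_sub, LinearMap.comp_smul,
    LinearMap.comp_assoc]⟩

theorem exists_equivariant_section (ha : IsLeftRegular a) (hu : IsUnit u)
    (hW : W ^ n = 1 + a * u) {q : R →ₗ[R] F} (hq : Surjective q) (hker : ∀ c, q c = 0 → a ∣ c)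
    {E : Type*} [AddCommGroup E] [Module R E] {T : Module.End R M} (hT : T ^ n = 1)
    {S : Module.End R E} (hS : S ^ n = 1) {ι : F →ₗ[R] E} {π : E →ₗ[R] M}
    (hι : Injective ι) (hπ : Surjective π) (hexact : Exact ι π)
    (hιW : ∀ y, ι (W • y) = S (ι y)) (hπS : ∀ x, π (S x) = T (π x)) :
    ∃ s : M →ₗ[R] E, π ∘ₗ s = LinearMap.id ∧ ∀ x, s (T x) = S (s x) := by
  obtain ⟨s₀, hs₀⟩ := Module.projective_lifting_property π LinearMap.id hπ
  obtain ⟨d, hd⟩ : ∃ d : M →ₗ[R] F, ι ∘ₗ d = S ∘ₗ s₀ - s₀ ∘ₗ T := by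
    refine LinearMap.exists_comp_eq_of_range_le hι ?_
    rintro _ ⟨x, rfl⟩
    exact (hexact _).mp (by simp [hπS, ← LinearMap.comp_apply π s₀, hs₀])
  have hNd : twistedNorm n (W • 1) T d = 0 := by
    have h := comp_twistedNorm n (W • 1) T (g := ι) (σ' := S) (by ext y; simp [hιW]) d
    rw [hd, twistedNorm_comp_sub_comp, hS, hT] at h
    ext x
    apply hι
    simpa using LinearMap.congr_fun h x
  obtain ⟨h, hh⟩ := exists_comp_sub_smul_eq_of_twistedNorm_eq_zero ha hu hW hq hker hT hNd
  refine ⟨s₀ + ι ∘ₗ h, ?_, fun x => ?_⟩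
  · rw [LinearMap.comp_add, hs₀, ← LinearMap.comp_assoc, hexact.linearMap_comp_eq_zero,
      LinearMap.zero_comp, add_zero]
  · have hhx : h (T x) = W • h x + d x := by rw [← hh]; simp
    have hdx : ι (d x) = S (s₀ x) - s₀ (T x) := by simpa using LinearMap.congr_fun hd x
    simp only [LinearMap.add_apply, LinearMap.comp_apply, map_add, hhx, hιW, hdx]
    abel

theorem pow_smul_eq_self_of_injective {E : Type*} [AddCommGroup E] [Module R E]
    {ι : F →ₗ[R] E} (hι : Injective ι) {S : Module.End R E} (hιW : ∀ y, ι (W • y) = S (ι y))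
    (hS : S ^ n = 1) (y : F) : W ^ n • y = y := by
  apply hι
  have hcomm := Module.End.commute_pow_left_of_commute (f := ι) (g := W • 1) (g₂ := S)
    (by ext; simp [hιW]) n
  simpa [smul_pow, hS] using (LinearMap.congr_fun hcomm y).symm

end Extension

theorem Int.exists_one_add_pow_prime_eq {p : ℕ} (hp : p.Prime) (hodd : Odd p) {i : ℕ}
    (hi : 2 ≤ i) {z : ℤ} (hz : ¬ (p : ℤ) ∣ z) :
    ∃ u : ℤ, ¬ (p : ℤ) ∣ u ∧ (1 + (p : ℤ) ^ (i - 1) * z) ^ p = 1 + (p : ℤ) ^ i * u := by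
  have hpZ : Prime (p : ℤ) := Nat.prime_iff_prime_int.mp hp
  have hdvd : (p : ℤ) ∣ (p : ℤ) ^ (i - 1) * z := (dvd_pow_self _ (by omega)).mul_right _
  have hlte := Int.emultiplicity_pow_sub_pow hp hodd (x := 1 + (p : ℤ) ^ (i - 1) * z) (y := 1)
    (by simpa using hdvd) (fun h => hpZ.not_dvd_one ((dvd_add_left hdvd).mp h)) p
  rw [one_pow, add_sub_cancel_left, emultiplicity_mul hpZ, emultiplicity_pow_self_of_prime hpZ,
    emultiplicity_eq_zero.mpr hz, Nat.Prime.emultiplicity_self hp, add_zero] at hlte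
  have hval : emultiplicity (p : ℤ) ((1 + (p : ℤ) ^ (i - 1) * z) ^ p - 1) = i := by
    rw [hlte]
    norm_cast
    omega
  obtain ⟨⟨u, hu⟩, hnot⟩ := emultiplicity_eq_coe.mp hval
  refine ⟨u, fun ⟨v, hv⟩ => hnot ⟨v, by rw [hu, hv, pow_succ]; ring⟩, ?_⟩
  rw [← hu]
  ring

theorem PadicInt.isUnit_intCast_of_not_dvd {p : ℕ} [Fact p.Prime] {u : ℤ} (hu : ¬ (p : ℤ) ∣ u) :
    IsUnit (u : ℤ_[p]) := by
  by_contra h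
  exact hu (PadicInt.norm_intCast_lt_one_iff.mp (PadicInt.not_isUnit_iff.mp h))

theorem ZMod.one_add_intCast_pow_ne_one {p i : ℕ} [Fact p.Prime] (hi : i ≠ 0) {z : ℤ}
    (hz : ¬ (p : ℤ) ∣ z) : (1 + (z : ZMod (p ^ i))) ^ p ≠ 1 := by
  intro h
  have h' := congrArg (ZMod.castHom (dvd_pow_self p hi) (ZMod p)) h
  rw [map_pow, map_add, map_one, map_intCast, ZMod.pow_card, add_eq_left,
    ZMod.intCast_zmod_eq_zero_iff_dvd] at h'
  exact hz h'

theorem stmt_4_general (p i : ℕ) [Fact p.Prime] (hp : Odd p) (hi : 1 ≤ i)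
    (z : ℤ) (hz : ¬ (p : ℤ) ∣ z)
    (w : ZMod (p ^ i)) (hw : w = 1 + (p : ZMod (p ^ i)) ^ (i - 1) * (z : ZMod (p ^ i)))
    -- the module F_i
    (F : Type) [AddCommGroup F] [Module ℤ_[p] F] (TF : Module.End ℤ_[p] F)
    (eF : F ≃+ ZMod (p ^ i)) (heF : ∀ x : F, eF (TF x) = w * eF x)
    (heFs : ∀ (c : ℤ_[p]) (x : F), eF (c • x) = PadicInt.toZModPow i c * eF x)
    -- an arbitrary lattice M_f
    (Mf : Type) [AddCommGroup Mf] [Module ℤ_[p] Mf]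
    [Module.Free ℤ_[p] Mf] (T : Module.End ℤ_[p] Mf) (hT : T ^ p = 1)
    -- an arbitrary extension 0 → F → E → M_f → 0 of ℤ_p[G]-modules
    (E : Type) [AddCommGroup E] [Module ℤ_[p] E] (S : Module.End ℤ_[p] E) (hS : S ^ p = 1)
    (ι : F →ₗ[ℤ_[p]] E) (π : E →ₗ[ℤ_[p]] Mf)
    (hι : Function.Injective ι) (hπ : Function.Surjective π)
    (hexact : Function.Exact ι π)
    (hιe : ∀ x, ι (TF x) = S (ι x)) (hπe : ∀ x, π (S x) = T (π x)) :
    ∃ s : Mf →ₗ[ℤ_[p]] E, π.comp s = LinearMap.id ∧ ∀ x, s (T x) = S (s x) := by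
  set W : ℤ_[p] := ((1 + (p : ℤ) ^ (i - 1) * z : ℤ) : ℤ_[p])
  have hWw : PadicInt.toZModPow i W = w := by simp [W, hw]
  have hιW : ∀ y, ι (W • y) = S (ι y) := fun y => by
    rw [← hιe]
    congr 1
    apply eF.injective
    rw [heF, heFs, hWw]
  set x₀ := eF.symm 1
  have hx₀ : ∀ c, eF (c • x₀) = PadicInt.toZModPow i c := by simp [heFs, x₀]
  obtain rfl | hi2 : i = 1 ∨ 2 ≤ i := by omega
  · have hwp : w ^ p = 1 := by
      rw [← hWw, ← map_pow, ← hx₀, pow_smul_eq_self_of_injective hι hιW hS,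
        AddEquiv.apply_symm_apply]
    simp only [hw, tsub_self, pow_zero, one_mul] at hwp
    exact (ZMod.one_add_intCast_pow_ne_one one_ne_zero hz hwp).elim
  obtain ⟨u, hu, hWu⟩ := Int.exists_one_add_pow_prime_eq Fact.out hp hi2 hz
  refine exists_equivariant_section (a := (p : ℤ_[p]) ^ i)
    (q := LinearMap.toSpanSingleton ℤ_[p] F x₀) ?_ (PadicInt.isUnit_intCast_of_not_dvd hu)
    (by simp only [W]; exact_mod_cast hWu) ?_ ?_ hT hS hι hπ hexact hιW hπe
  · exact (IsRegular.of_ne_zero (by simp [(Fact.out : p.Prime).ne_zero])).left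
  · intro y
    refine ⟨((eF y).val : ℤ_[p]), eF.injective ?_⟩
    rw [LinearMap.toSpanSingleton_apply, hx₀, map_natCast, ZMod.natCast_zmod_val]
  · intro c hc
    rw [← Ideal.mem_span_singleton, ← PadicInt.ker_toZModPow, RingHom.mem_ker, ← hx₀]
    simpa using hc

theorem stmt_4 (p i : ℕ) [Fact p.Prime] (hp : Odd p) (hi : 1 ≤ i)
    (z : ℤ) (hz : ¬ (p : ℤ) ∣ z)
    (w : ZMod (p ^ i)) (hw : w = 1 + (p : ZMod (p ^ i)) ^ (i - 1) * (z : ZMod (p ^ i)))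
    (hw1 : w ≠ 1)
    -- the module F_i
    (F : Type) [AddCommGroup F] [Module ℤ_[p] F] (TF : Module.End ℤ_[p] F)
    (eF : F ≃+ ZMod (p ^ i)) (heF : ∀ x : F, eF (TF x) = w * eF x)
    (heFs : ∀ (c : ℤ_[p]) (x : F), eF (c • x) = PadicInt.toZModPow i c * eF x)
    -- an arbitrary lattice M_f
    (Mf : Type) [AddCommGroup Mf] [Module ℤ_[p] Mf] [Module.Finite ℤ_[p] Mf]
    [Module.Free ℤ_[p] Mf] (T : Module.End ℤ_[p] Mf) (hT : T ^ p = 1)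
    -- an arbitrary extension 0 → F → E → M_f → 0 of ℤ_p[G]-modules
    (E : Type) [AddCommGroup E] [Module ℤ_[p] E] (S : Module.End ℤ_[p] E) (hS : S ^ p = 1)
    (ι : F →ₗ[ℤ_[p]] E) (π : E →ₗ[ℤ_[p]] Mf)
    (hι : Function.Injective ι) (hπ : Function.Surjective π)
    (hexact : Function.Exact ι π)
    (hιe : ∀ x, ι (TF x) = S (ι x)) (hπe : ∀ x, π (S x) = T (π x)) :
    ∃ s : Mf →ₗ[ℤ_[p]] E, π.comp s = LinearMap.id ∧ ∀ x, s (T x) = S (s x) :=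
  stmt_4_general p i hp hi z hz w hw F TF eF heF heFs Mf T hT E S hS ι π hι hπ hexact hιe hπe
end

section
/- Let p be an odd prime, G cyclic of order p, and i >= 1. Then Ext^1_{Z_p[G]}(Z_p, Z/p^i Z) and Ext^1_{Z_p[G]}(A, Z/p^i Z) are both isomorphic to Z/pZ, where Z_p and Z/p^i Z carry the trivial G-action and A is the augmentation kernel of the norm map Z_p[G] -> Z_p. -/
/-!
STATEMENT 5: `p` odd prime, `G` cyclic of order `p` (realised as
`Multiplicative (ZMod p)`), `i ≥ 1`.  In the category of modules over the
group ring `ℤ_[p][G]`, we have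
`Ext¹(ℤ_p, ZMod (p^i)) ≃ ZMod p` and `Ext¹(A, ZMod (p^i)) ≃ ZMod p`,
where `ℤ_p` and `ZMod (p^i)` carry the trivial `G`-action (via the
augmentation map) and `A` is the augmentation ideal
`ker (Norm : ℤ_[p][G] → ℤ_[p])`.
-/

open CategoryTheory

abbrev Gc (p : ℕ) := Multiplicative (ZMod p)

abbrev GrpRing (p : ℕ) [Fact p.Prime] := MonoidAlgebra ℤ_[p] (Gc p)

/-- The augmentation (norm) map `ℤ_[p][G] → ℤ_[p]`, sending every group
element to `1`. -/
noncomputable def augm (p : ℕ) [Fact p.Prime] : GrpRing p →ₐ[ℤ_[p]] ℤ_[p] :=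
  MonoidAlgebra.lift ℤ_[p] ℤ_[p] (Gc p) 1

/-- `ℤ_[p]` with the trivial `G`-action, as a `ℤ_[p][G]`-module. -/
def TrivZp (p : ℕ) [Fact p.Prime] : Type := ℤ_[p]

noncomputable instance (p : ℕ) [Fact p.Prime] : AddCommGroup (TrivZp p) :=
  inferInstanceAs (AddCommGroup ℤ_[p])

noncomputable instance (p : ℕ) [Fact p.Prime] : Module (GrpRing p) (TrivZp p) :=
  Module.compHom ℤ_[p] (augm p).toRingHom

/-- `ZMod (p^i)` with the trivial `G`-action, as a `ℤ_[p][G]`-module. -/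
def TrivZmod (p i : ℕ) [Fact p.Prime] : Type := ZMod (p ^ i)

noncomputable instance (p i : ℕ) [Fact p.Prime] : AddCommGroup (TrivZmod p i) :=
  inferInstanceAs (AddCommGroup (ZMod (p ^ i)))

noncomputable instance (p i : ℕ) [Fact p.Prime] : Module (GrpRing p) (TrivZmod p i) :=
  Module.compHom (ZMod (p ^ i)) ((PadicInt.toZModPow i).comp (augm p).toRingHom)

/-- The augmentation ideal `A = ker (Norm : ℤ_[p][G] → ℤ_[p])`, as a
`ℤ_[p][G]`-module. -/
noncomputable def AugId (p : ℕ) [Fact p.Prime] : Ideal (GrpRing p) :=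
  RingHom.ker (augm p).toRingHom

/-
Let `σ` generate `G`, `t = σ - 1` and `N = ∑ g`. For a cyclic group the kernel of
multiplication by `t` on `Λ = ℤ_p[G]` is `NΛ`, the kernel of `N` is `tΛ`, and the kernel of
the augmentation is `tΛ`. Hence `ℤ_p` and `A = tΛ` have the 2-periodic free resolutions
`⋯ → Λ --N→ Λ --t→ Λ → ℤ_p` and `⋯ → Λ --t→ Λ --N→ Λ → A`. Applying `Hom(-, M)` with
`M = ℤ/p^i` and identifying `Hom(Λ, M)` with `M`, on which `t` acts as `0` and `N` as `p`,
gives `Ext¹(ℤ_p, M) = ker(p : M → M)` and `Ext¹(A, M) = M / pM`, both cyclic of order `p`.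
-/

universe u

namespace ZMod

variable {N : ℕ} [NeZero N]

theorem mem_range_mulLeft_iff {n : ℕ} (hn : n ∣ N) (x : ZMod N) :
    x ∈ (AddMonoidHom.mulLeft (n : ZMod N)).range ↔ n ∣ x.val := by
  constructor
  · rintro ⟨y, rfl⟩
    rw [AddMonoidHom.coe_mulLeft, val_mul, val_natCast]
    exact (Nat.dvd_mod_iff hn).2 (((Nat.dvd_mod_iff hn).2 dvd_rfl).mul_right _)
  · rintro ⟨c, hc⟩
    exact ⟨c, by rw [AddMonoidHom.coe_mulLeft, ← Nat.cast_mul, ← hc, natCast_zmod_val]⟩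

theorem ker_mulLeft_eq_range_mulLeft {m n : ℕ} (h : m * n = N) :
    (AddMonoidHom.mulLeft (m : ZMod N)).ker = (AddMonoidHom.mulLeft (n : ZMod N)).range := by
  ext x
  have hm : m ≠ 0 := left_ne_zero_of_mul (h ▸ NeZero.ne N)
  rw [AddMonoidHom.mem_ker, mem_range_mulLeft_iff (Dvd.intro_left m h), AddMonoidHom.coe_mulLeft]
  conv_lhs => rw [← natCast_zmod_val x, ← Nat.cast_mul, natCast_eq_zero_iff]
  rw [← Nat.mul_dvd_mul_iff_left (Nat.pos_of_ne_zero hm) (b := n), h]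

theorem ker_castHom_eq_range_mulLeft {m : ℕ} (h : m ∣ N) :
    (castHom h (ZMod m)).toAddMonoidHom.ker = (AddMonoidHom.mulLeft (m : ZMod N)).range := by
  ext x
  rw [mem_range_mulLeft_iff h, AddMonoidHom.mem_ker, RingHom.toAddMonoidHom_eq_coe,
    AddMonoidHom.coe_coe, castHom_apply, cast_eq_val, natCast_eq_zero_iff]

noncomputable def quotientRangeMulLeftAddEquiv {m : ℕ} (h : m ∣ N) :
    ZMod N ⧸ (AddMonoidHom.mulLeft (m : ZMod N)).range ≃+ ZMod m :=
  (QuotientAddGroup.quotientAddEquivOfEq (ker_castHom_eq_range_mulLeft h).symm).trans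
    (QuotientAddGroup.quotientKerEquivOfSurjective _ (castHom_surjective h))

/-- `ker (m ·) = range (n ·) ≅ ZMod N ⧸ ker (n ·) = ZMod N ⧸ range (m ·) ≅ ZMod m`. -/
noncomputable def kerMulLeftAddEquiv {m n : ℕ} (h : m * n = N) :
    (AddMonoidHom.mulLeft (m : ZMod N)).ker ≃+ ZMod m :=
  (AddEquiv.addSubgroupCongr (ker_mulLeft_eq_range_mulLeft h)).trans <|
    (QuotientAddGroup.quotientKerEquivRange _).symm.trans <|
      (QuotientAddGroup.quotientAddEquivOfEq
        (ker_mulLeft_eq_range_mulLeft ((mul_comm n m).trans h))).trans <|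
        quotientRangeMulLeftAddEquiv (Dvd.intro n h)

end ZMod

namespace CategoryTheory.ShortComplex

variable {R : Type u} [Ring R] (T : ShortComplex (ModuleCat.{u} R))

noncomputable def moduleCatHomologyIsoKer (hf : T.f = 0) :
    T.homology ≅ ModuleCat.of R (LinearMap.ker T.g.hom) :=
  (T.asIsoHomologyπ hf).symm ≪≫ T.moduleCatCyclesIso

noncomputable def moduleCatHomologyIsoCoker (hg : T.g = 0) :
    T.homology ≅ ModuleCat.of R (T.X₂ ⧸ LinearMap.range T.f.hom) :=
  T.asIsoHomologyι hg ≪≫ T.moduleCatOpcyclesIso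

end CategoryTheory.ShortComplex

section PeriodicResolution

variable {S : Type u} [CommRing S]

noncomputable abbrev mulLeftHom (a : S) : ModuleCat.of S S ⟶ ModuleCat.of S S :=
  ModuleCat.ofHom (LinearMap.mulLeft S a)

theorem mulLeftHom_comp_mulLeftHom (a b : S) :
    mulLeftHom a ≫ mulLeftHom b = mulLeftHom (b * a) :=
  ModuleCat.hom_ext (LinearMap.ext fun x => (mul_assoc b a x).symm)

theorem mulLeftHom_eq_zero {a : S} (h : a = 0) : mulLeftHom a = 0 :=
  ModuleCat.hom_ext (LinearMap.ext fun x => by simp [h])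

theorem mul_eq_zero_of_exact_mul {a b : S} (h : Function.Exact (a * ·) (b * ·)) : a * b = 0 := by
  simpa [mul_comm] using h.apply_apply_eq_zero 1

/-- The complex `⋯ --a→ S --b→ S --a→ S` with `d₁₀ = a`: `alternatingConst` puts `φ = b` on the
differentials out of even degrees. -/
noncomputable def periodicComplex (a b : S) (hab : a * b = 0) :
    ChainComplex (ModuleCat.{u} S) ℕ :=
  HomologicalComplex.alternatingConst (ModuleCat.of S S) (φ := mulLeftHom b) (ψ := mulLeftHom a)
    (by rw [mulLeftHom_comp_mulLeftHom, mulLeftHom_eq_zero hab])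
    (by rw [mulLeftHom_comp_mulLeftHom, mul_comm, mulLeftHom_eq_zero hab])
    (fun _ _ => ComplexShape.down_nat_odd_add)

theorem periodicComplex_d_one_zero (a b : S) (hab : a * b = 0) :
    (periodicComplex a b hab).d 1 0 = mulLeftHom a :=
  rfl

theorem periodicComplex_exactAt_succ {a b : S} (hab : a * b = 0)
    (hba : Function.Exact (b * ·) (a * ·)) (hab' : Function.Exact (a * ·) (b * ·)) (n : ℕ) :
    (periodicComplex a b hab).ExactAt (n + 1) := by
  rw [HomologicalComplex.exactAt_iff' _ (n + 2) (n + 1) n (by simp) (by simp)]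
  rcases Nat.even_or_odd (n + 1) with hn | hn
  · refine (ShortComplex.exact_iff_of_iso (HomologicalComplex.alternatingConstScIsoEven
      (ModuleCat.of S S) _ _ _ (i := n + 2) (by simp) (by simp) hn)).2 ?_
    exact (ShortComplex.ShortExact.moduleCat_exact_iff_function_exact _).2 hab'
  · refine (ShortComplex.exact_iff_of_iso (HomologicalComplex.alternatingConstScIsoOdd
      (ModuleCat.of S S) _ _ _ (i := n + 2) (by simp) (by simp) hn)).2 ?_
    exact (ShortComplex.ShortExact.moduleCat_exact_iff_function_exact _).2 hba

/-- `Hom(-, Y)` applied to `S --b→ S --a→ S`, after identifying `Hom(S, Y)` with `Y`. -/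
noncomputable abbrev smulShortComplex (Y : ModuleCat.{u} S) (a b : S) (hab : a * b = 0) :
    ShortComplex (ModuleCat.{u} S) :=
  ShortComplex.mk (ModuleCat.ofHom (LinearMap.lsmul S Y a))
    (ModuleCat.ofHom (LinearMap.lsmul S Y b))
    (ModuleCat.hom_ext (LinearMap.ext fun y => by simp [smul_smul, hab]))

noncomputable def homFromSelfEquiv (Y : ModuleCat.{u} S) : (ModuleCat.of S S ⟶ Y) ≃ₗ[S] Y :=
  ModuleCat.homLinearEquiv.trans (LinearMap.ringLmapEquivSelf S S Y)

theorem homFromSelfEquiv_mulLeftHom_comp (Y : ModuleCat.{u} S) (a : S)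
    (f : ModuleCat.of S S ⟶ Y) :
    homFromSelfEquiv Y (mulLeftHom a ≫ f) = a • homFromSelfEquiv Y f := by
  change f.hom (a * 1) = a • f.hom 1
  rw [← smul_eq_mul, map_smul]

noncomputable def periodicComplexLinearYonedaScIso {a b : S} (hab : a * b = 0)
    (Y : ModuleCat.{u} S) :
    ((periodicComplex a b hab).linearYonedaObj S Y).sc' 0 1 2 ≅ smulShortComplex Y a b hab :=
  ShortComplex.isoMk (homFromSelfEquiv Y).toModuleIso (homFromSelfEquiv Y).toModuleIso
    (homFromSelfEquiv Y).toModuleIso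
    (ModuleCat.hom_ext (LinearMap.ext fun (f : ModuleCat.of S S ⟶ Y) =>
      (homFromSelfEquiv_mulLeftHom_comp Y a f).symm))
    (ModuleCat.hom_ext (LinearMap.ext fun (f : ModuleCat.of S S ⟶ Y) =>
      (homFromSelfEquiv_mulLeftHom_comp Y b f).symm))

variable {X : Type u} [AddCommGroup X] [Module S X] {a b : S} (π : S →ₗ[S] X)
  (hπ : Function.Surjective π) (hπa : Function.Exact (a * ·) π)
  (hba : Function.Exact (b * ·) (a * ·)) (hab : Function.Exact (a * ·) (b * ·))

noncomputable def periodicResolution : ProjectiveResolution (ModuleCat.of S X) where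
  complex := periodicComplex a b (mul_eq_zero_of_exact_mul hab)
  projective _ := (IsProjective.iff_projective _).1 inferInstance
  π := (ChainComplex.toSingle₀Equiv _ _).symm ⟨ModuleCat.ofHom π, by
    rw [periodicComplex_d_one_zero]
    exact ModuleCat.hom_ext (LinearMap.ext hπa.apply_apply_eq_zero)⟩
  quasiIso := ⟨fun n => by
    cases n with
    | zero =>
      rw [ChainComplex.quasiIsoAt₀_iff, ShortComplex.quasiIso_iff_of_zeros' _ rfl rfl rfl]
      exact ⟨(ShortComplex.ShortExact.moduleCat_exact_iff_function_exact _).2 hπa,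
        (ModuleCat.epi_iff_surjective _).2 hπ⟩
    | succ n =>
      rw [quasiIsoAt_iff_exactAt' _ _ (ChainComplex.exactAt_succ_single_obj _ _)]
      exact periodicComplex_exactAt_succ _ hba hab n⟩

noncomputable def extOneIsoOfPeriodicResolution (Y : ModuleCat.{u} S) :
    ((Ext S (ModuleCat.{u} S) 1).obj (Opposite.op (ModuleCat.of S X))).obj Y ≅
      (smulShortComplex Y a b (mul_eq_zero_of_exact_mul hab)).homology :=
  (periodicResolution π hπ hπa hba hab).isoExt 1 Y ≪≫
    ShortComplex.homologyMapIso (HomologicalComplex.isoSc' _ 0 1 2 (by simp) (by simp) ≪≫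
      periodicComplexLinearYonedaScIso _ Y)

end PeriodicResolution

section GroupRing

variable {k G : Type*} [CommRing k] [CommGroup G]

theorem Representation.leftRegular_apply_eq_of_mul (g : G) (x : MonoidAlgebra k G) :
    Representation.leftRegular k G g x = MonoidAlgebra.of k G g * x := by
  rw [← Representation.asAlgebraHom_ofMulAction_smul_eq_mul, Representation.asAlgebraHom_of]

theorem MonoidAlgebra.lift_one_of (g : G) :
    MonoidAlgebra.lift k k G 1 (MonoidAlgebra.of k G g) = 1 := by
  rw [MonoidAlgebra.lift_of]; rfl

theorem MonoidAlgebra.lift_one_of_sub_one (g : G) :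
    MonoidAlgebra.lift k k G 1 (MonoidAlgebra.of k G g - 1) = 0 := by
  rw [map_sub, MonoidAlgebra.lift_one_of, map_one, sub_self]

theorem MonoidAlgebra.linearCombination_one_comp_coeff_eq_lift :
    Finsupp.linearCombination k (fun _ : G => (1 : k)) ∘ₗ
        (MonoidAlgebra.coeffLinearEquiv k).toLinearMap =
      (MonoidAlgebra.lift k k G 1).toLinearMap := by
  refine LinearMap.ext fun x => ?_
  simp [MonoidAlgebra.lift_apply, Finsupp.linearCombination_apply]

variable (k G) [Fintype G]

noncomputable def groupRingNorm : MonoidAlgebra k G := ∑ g : G, MonoidAlgebra.of k G g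

variable {k G}

theorem lift_one_groupRingNorm :
    MonoidAlgebra.lift k k G 1 (groupRingNorm k G) = Fintype.card G := by
  simp [groupRingNorm]

end GroupRing

section CyclicGroupRing

variable {k G : Type u} [CommRing k] [CommGroup G]

theorem Rep.leftRegular_norm_hom [Fintype G] :
    (Rep.leftRegular k G).norm.hom.toLinearMap = LinearMap.mulLeft k (groupRingNorm k G) := by
  refine LinearMap.ext fun (x : MonoidAlgebra k G) => ?_
  change (Representation.norm _ : Module.End k (MonoidAlgebra k G)) x = _
  simp [Representation.norm, groupRingNorm, Finset.sum_mul,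
    Representation.leftRegular_apply_eq_of_mul]

theorem Rep.leftRegular_applyAsHom_sub_id_hom (g : G) :
    (Rep.applyAsHom (Rep.leftRegular k G) g - 𝟙 _).hom.toLinearMap =
      LinearMap.mulLeft k (MonoidAlgebra.of k G g - 1) := by
  refine LinearMap.ext fun (x : MonoidAlgebra k G) => ?_
  rw [LinearMap.mulLeft_apply, sub_mul, one_mul]
  simp [Rep.sub_hom, Rep.applyAsHom, Representation.leftRegular_apply_eq_of_mul]

open Rep.FiniteCyclicGroup.leftRegular

variable [Fintype G] {g : G}

theorem exact_mul_of_sub_one_lift_one (hg : ∀ x, x ∈ Subgroup.zpowers g) :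
    Function.Exact ((MonoidAlgebra.of k G g - 1) * ·) (MonoidAlgebra.lift k k G 1) := by
  have h := range_applyAsHom_sub_eq_ker_linearCombination k g hg
  rw [Rep.leftRegular_applyAsHom_sub_id_hom,
    MonoidAlgebra.linearCombination_one_comp_coeff_eq_lift] at h
  exact LinearMap.exact_iff.mpr h.symm

theorem exact_mul_groupRingNorm_mul_of_sub_one (hg : ∀ x, x ∈ Subgroup.zpowers g) :
    Function.Exact (groupRingNorm k G * ·) ((MonoidAlgebra.of k G g - 1) * ·) := by
  have h := range_norm_eq_ker_applyAsHom_sub k g hg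
  rw [Rep.leftRegular_applyAsHom_sub_id_hom, Rep.leftRegular_norm_hom] at h
  exact LinearMap.exact_iff.mpr h.symm

theorem exact_mul_of_sub_one_mul_groupRingNorm (hg : ∀ x, x ∈ Subgroup.zpowers g) :
    Function.Exact ((MonoidAlgebra.of k G g - 1) * ·) (groupRingNorm k G * ·) := by
  have h := range_applyAsHom_sub_eq_ker_norm k g hg
  rw [Rep.leftRegular_applyAsHom_sub_id_hom, Rep.leftRegular_norm_hom] at h
  exact LinearMap.exact_iff.mpr h.symm

end CyclicGroupRing

theorem Multiplicative.mem_zpowers_ofAdd_one {n : ℕ} (x : Multiplicative (ZMod n)) :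
    x ∈ Subgroup.zpowers (Multiplicative.ofAdd (1 : ZMod n)) :=
  ⟨(Multiplicative.toAdd x).cast, by
    show Multiplicative.ofAdd 1 ^ _ = x
    rw [← ofAdd_zsmul, zsmul_one, ZMod.intCast_zmod_cast, ofAdd_toAdd]⟩

section PadicGroupRing

variable (p : ℕ) [Fact p.Prime]

noncomputable abbrev genSubOne : GrpRing p := MonoidAlgebra.of ℤ_[p] (Gc p) (.ofAdd 1) - 1

theorem augm_eq_lift : augm p = MonoidAlgebra.lift ℤ_[p] ℤ_[p] (Gc p) 1 := rfl

theorem exact_mulGenSubOne_augm : Function.Exact (genSubOne p * ·) (augm p) :=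
  exact_mul_of_sub_one_lift_one Multiplicative.mem_zpowers_ofAdd_one

noncomputable def augmLinearMap : GrpRing p →ₗ[GrpRing p] TrivZp p where
  toFun x := augm p x
  map_add' := map_add (augm p)
  map_smul' := map_mul (augm p)

theorem augmLinearMap_surjective : Function.Surjective (augmLinearMap p) :=
  fun c => ⟨algebraMap ℤ_[p] (GrpRing p) c, (augm p).commutes c⟩

theorem mul_genSubOne_mem_augId (x : GrpRing p) : genSubOne p * x ∈ AugId p := by
  rw [AugId, RingHom.mem_ker]
  change augm p (genSubOne p * x) = 0
  rw [map_mul, augm_eq_lift, MonoidAlgebra.lift_one_of_sub_one, zero_mul]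

noncomputable def mulGenSubOneToAugId : GrpRing p →ₗ[GrpRing p] AugId p :=
  LinearMap.codRestrict (AugId p) (LinearMap.mulLeft (GrpRing p) (genSubOne p))
    (mul_genSubOne_mem_augId p)

theorem mulGenSubOneToAugId_surjective : Function.Surjective (mulGenSubOneToAugId p) := by
  rintro ⟨z, hz⟩
  obtain ⟨y, rfl⟩ := (exact_mulGenSubOne_augm p z).1 hz
  exact ⟨y, rfl⟩

theorem exact_mulGroupRingNorm_mulGenSubOneToAugId :
    Function.Exact (groupRingNorm ℤ_[p] (Gc p) * ·) (mulGenSubOneToAugId p) := by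
  intro x
  rw [← exact_mul_groupRingNorm_mul_of_sub_one (k := ℤ_[p])
    (Multiplicative.mem_zpowers_ofAdd_one (n := p)) x]
  exact Submodule.coe_eq_zero.symm

variable (i : ℕ)

theorem ofHom_lsmul_genSubOne_trivZmod :
    ModuleCat.ofHom (LinearMap.lsmul (GrpRing p) (TrivZmod p i) (genSubOne p)) = 0 :=
  ModuleCat.hom_ext <| LinearMap.ext fun (y : ZMod (p ^ i)) => by
    change PadicInt.toZModPow i (augm p (genSubOne p)) * y = 0
    rw [augm_eq_lift, MonoidAlgebra.lift_one_of_sub_one, map_zero, zero_mul]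

theorem lsmul_groupRingNorm_trivZmod :
    (LinearMap.lsmul (GrpRing p) (TrivZmod p i) (groupRingNorm ℤ_[p] (Gc p))).toAddMonoidHom =
      AddMonoidHom.mulLeft (p : ZMod (p ^ i)) :=
  AddMonoidHom.ext fun (y : ZMod (p ^ i)) => by
    change PadicInt.toZModPow i (augm p (groupRingNorm ℤ_[p] (Gc p))) * y = p * y
    rw [augm_eq_lift, lift_one_groupRingNorm, Fintype.card_multiplicative, ZMod.card,
      map_natCast]

noncomputable def extOneTrivZpIso :
    ((Ext (GrpRing p) (ModuleCat (GrpRing p)) 1).obj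
        (Opposite.op (ModuleCat.of (GrpRing p) (TrivZp p)))).obj
        (ModuleCat.of (GrpRing p) (TrivZmod p i)) ≅
      ModuleCat.of (GrpRing p) (LinearMap.ker
        (LinearMap.lsmul (GrpRing p) (TrivZmod p i) (groupRingNorm ℤ_[p] (Gc p)))) :=
  extOneIsoOfPeriodicResolution (augmLinearMap p) (augmLinearMap_surjective p)
      (exact_mulGenSubOne_augm p)
      (exact_mul_groupRingNorm_mul_of_sub_one Multiplicative.mem_zpowers_ofAdd_one)
      (exact_mul_of_sub_one_mul_groupRingNorm Multiplicative.mem_zpowers_ofAdd_one) _ ≪≫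
    ShortComplex.moduleCatHomologyIsoKer _ (ofHom_lsmul_genSubOne_trivZmod p i)

noncomputable def extOneAugIdIso :
    ((Ext (GrpRing p) (ModuleCat (GrpRing p)) 1).obj
        (Opposite.op (ModuleCat.of (GrpRing p) (AugId p)))).obj
        (ModuleCat.of (GrpRing p) (TrivZmod p i)) ≅
      ModuleCat.of (GrpRing p) (TrivZmod p i ⧸ LinearMap.range
        (LinearMap.lsmul (GrpRing p) (TrivZmod p i) (groupRingNorm ℤ_[p] (Gc p)))) :=
  extOneIsoOfPeriodicResolution (mulGenSubOneToAugId p) (mulGenSubOneToAugId_surjective p)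
      (exact_mulGroupRingNorm_mulGenSubOneToAugId p)
      (exact_mul_of_sub_one_mul_groupRingNorm Multiplicative.mem_zpowers_ofAdd_one)
      (exact_mul_groupRingNorm_mul_of_sub_one Multiplicative.mem_zpowers_ofAdd_one) _ ≪≫
    ShortComplex.moduleCatHomologyIsoCoker _ (ofHom_lsmul_genSubOne_trivZmod p i)

end PadicGroupRing

theorem stmt_5_general (p i : ℕ) [Fact p.Prime] (hi : 1 ≤ i) :
    Nonempty
      ((((Ext (GrpRing p) (ModuleCat (GrpRing p)) 1).obj
          (Opposite.op (ModuleCat.of (GrpRing p) (TrivZp p)))).obj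
          (ModuleCat.of (GrpRing p) (TrivZmod p i)) : Type _) ≃+ ZMod p) ∧
    Nonempty
      ((((Ext (GrpRing p) (ModuleCat (GrpRing p)) 1).obj
          (Opposite.op (ModuleCat.of (GrpRing p) ↥(AugId p)))).obj
          (ModuleCat.of (GrpRing p) (TrivZmod p i)) : Type _) ≃+ ZMod p) := by
  have hi : i ≠ 0 := Nat.one_le_iff_ne_zero.mp hi
  have hker := congrArg AddMonoidHom.ker (lsmul_groupRingNorm_trivZmod p i)
  have hrange := congrArg AddMonoidHom.range (lsmul_groupRingNorm_trivZmod p i)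
  exact ⟨⟨(extOneTrivZpIso p i).toLinearEquiv.toAddEquiv.trans <|
      (AddEquiv.addSubgroupCongr hker).trans (ZMod.kerMulLeftAddEquiv (mul_pow_sub_one hi p))⟩,
    ⟨(extOneAugIdIso p i).toLinearEquiv.toAddEquiv.trans <|
      (QuotientAddGroup.quotientAddEquivOfEq hrange).trans
        (ZMod.quotientRangeMulLeftAddEquiv (dvd_pow_self p hi))⟩⟩

theorem stmt_5 (p i : ℕ) [Fact p.Prime] (hp : Odd p) (hi : 1 ≤ i) :
    Nonempty
      ((((Ext (GrpRing p) (ModuleCat (GrpRing p)) 1).obj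
          (Opposite.op (ModuleCat.of (GrpRing p) (TrivZp p)))).obj
          (ModuleCat.of (GrpRing p) (TrivZmod p i)) : Type _) ≃+ ZMod p) ∧
    Nonempty
      ((((Ext (GrpRing p) (ModuleCat (GrpRing p)) 1).obj
          (Opposite.op (ModuleCat.of (GrpRing p) ↥(AugId p)))).obj
          (ModuleCat.of (GrpRing p) (TrivZmod p i)) : Type _) ≃+ ZMod p) :=
  stmt_5_general p i hi
end

section
/- Let p be an odd prime and G cyclic of order p with generator tau. Fix i >= 1, a in Z with a >= 1, and a nonzero Z_p-linear map u: Z_p^a -> F_p. Define M_u to be the Z_p-module (Z/p^i Z) x Z_p^a with tau acting by tau(t,x) = (t + u(x) p^{i-1}, x). Then the norm map on M_u is given by N(t,x) = (pt, px), hence H^0_hat(G, M_u) is isomorphic to F_p^a and H^1(G, M_u) = 0. -/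
/-!
Write `M = ZMod (p ^ i) × ℤ_p^a`. Since `τ ^ j (t, x) = (t + j • u x, x)`, the norm is
`N (t, x) = (p t + (p (p - 1) / 2) • u x, p x) = (p t, p x)`: `p` is odd, so `p ∣ p (p - 1) / 2`,
and `u x` is killed by `p`. Moreover `(τ - 1) (t, x) = (u x, 0)`.

The image of `u` is a nonzero subgroup of the `p`-torsion `p^(i-1) ZMod (p ^ i)` of order `p`, so
it is all of it and contains `p^(i-1) = u v` for some `v`. As `ℤ_p^a` has no `p`-torsion,
`ker N = (p-torsion) × 0 = (τ - 1) M`, i.e. `H¹ = 0`. For `Ĥ⁰`, the map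
`(t, x) ↦ x̄ + t̄ v̄ : M^G = ZMod (p ^ i) × ker u → 𝔽_p^a` is onto and its kernel is `p M = N M`:
if `x̄ + t̄ v̄ = 0` then `x + t v ∈ p ℤ_p^a` is killed by `u`, whence `p ∣ t` and then `p ∣ x`.
-/

open Finset

lemma Odd.dvd_sum_range_id {p : ℕ} (hp : Odd p) : p ∣ ∑ j ∈ range p, j := by
  rw [sum_range_id, Nat.mul_div_assoc p (Nat.Odd.sub_odd hp odd_one).two_dvd]
  exact dvd_mul_right p _

section Shear

variable {A X : Type*} [AddCommGroup A] [AddCommGroup X] (u : X →+ A)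

def shear : AddMonoid.End (A × X) where
  toFun m := (m.1 + u m.2, m.2)
  map_zero' := by simp
  map_add' m n := by ext <;> simp [add_add_add_comm]

@[simp]
lemma shear_apply (m : A × X) : shear u m = (m.1 + u m.2, m.2) := rfl

lemma shear_pow_apply (j : ℕ) (m : A × X) : (shear u ^ j) m = (m.1 + j • u m.2, m.2) := by
  rw [AddMonoid.End.coe_pow]
  induction j with
  | zero => simp
  | succ j ih => rw [Function.iterate_succ_apply', ih, shear_apply, succ_nsmul, add_assoc]

@[simp]
lemma shear_sub_one_apply (m : A × X) : (shear u - 1) m = (u m.2, 0) := by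
  change shear u m - m = _
  ext <;> simp

lemma sum_range_shear_pow {p : ℕ} (hp : Odd p) (hu : ∀ x, p • u x = 0) :
    ∑ j ∈ range p, shear u ^ j = p := by
  obtain ⟨k, hk⟩ := hp.dvd_sum_range_id
  refine AddMonoidHom.ext fun m => (AddMonoidHom.finsetSum_apply _ _ m).trans ?_
  change ∑ j ∈ range p, (shear u ^ j) m = p • m
  simp only [shear_pow_apply]
  ext
  · simp [Prod.fst_sum, sum_add_distrib, ← sum_smul, hk, mul_comm p k, mul_smul, hu]
  · simp [Prod.snd_sum]

lemma mem_ker_shear_sub_one {m : A × X} :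
    m ∈ AddMonoidHom.ker (shear u - 1) ↔ u m.2 = 0 := by
  change (shear u - 1) m = 0 ↔ _
  simp [Prod.ext_iff]

lemma ker_natCast_le_range_shear_sub_one {p : ℕ} (hX : ∀ x : X, p • x = 0 → x = 0)
    (hu : ∀ t : A, p • t = 0 → t ∈ u.range) :
    AddMonoidHom.ker (p : AddMonoid.End (A × X)) ≤ AddMonoidHom.range (shear u - 1) := by
  rintro ⟨t, x⟩ h
  change p • (t, x) = 0 at h
  obtain ⟨ht, hx⟩ := Prod.ext_iff.1 h
  obtain ⟨y, rfl⟩ := hu t ht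
  refine ⟨(0, y), ?_⟩
  change (shear u - 1) (0, y) = _
  simp [hX x hx]

end Shear

namespace ZMod

variable {p n : ℕ}

lemma exists_eq_natCast_pow_pred_mul_of_nsmul_eq_zero (hp : p ≠ 0) {t : ZMod (p ^ n)}
    (ht : p • t = 0) : ∃ c : ℕ, t = ((p ^ (n - 1) * c : ℕ) : ZMod (p ^ n)) := by
  have : NeZero (p ^ n) := ⟨pow_ne_zero n hp⟩
  rw [← natCast_zmod_val t, nsmul_eq_mul, ← Nat.cast_mul, natCast_eq_zero_iff] at ht
  obtain ⟨c, hc⟩ : p ^ (n - 1) ∣ t.val := by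
    obtain _ | n := n
    · simp
    · exact (Nat.mul_dvd_mul_iff_left (Nat.pos_of_ne_zero hp)).1
        (by rwa [Nat.add_sub_cancel, ← pow_succ'])
  exact ⟨c, by rw [← hc, natCast_zmod_val]⟩

lemma natCast_pow_pred_mul_eq_iff (hp : p ≠ 0) (hn : n ≠ 0) {a b : ℕ} :
    ((p ^ (n - 1) * a : ℕ) : ZMod (p ^ n)) = ((p ^ (n - 1) * b : ℕ) : ZMod (p ^ n)) ↔
      a ≡ b [MOD p] := by
  have hpow : p ^ n = p ^ (n - 1) * p := by rw [← pow_succ, Nat.sub_add_cancel (by omega)]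
  rw [natCast_eq_natCast_iff, hpow, Nat.ModEq.mul_left_cancel_iff' (pow_ne_zero (n - 1) hp)]

lemma exists_addMonoidHom_eq_natCast_pow_pred [Fact p.Prime] (hn : n ≠ 0) {X : Type*}
    [AddCommGroup X] (u : X →+ ZMod (p ^ n)) (hu : ∀ x, p • u x = 0) (hu0 : u ≠ 0) :
    ∃ v, u v = ((p ^ (n - 1) : ℕ) : ZMod (p ^ n)) := by
  have hp : p.Prime := Fact.out
  obtain ⟨x, hx⟩ := DFunLike.ne_iff.1 hu0
  obtain ⟨d, hd⟩ := exists_eq_natCast_pow_pred_mul_of_nsmul_eq_zero hp.ne_zero (hu x)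
  have hpd : ¬ p ∣ d := fun hdvd => hx <| by
    rw [hd, AddMonoidHom.zero_apply, ← Nat.cast_zero, ← mul_zero (p ^ (n - 1)),
      natCast_pow_pred_mul_eq_iff hp.ne_zero hn]
    exact Nat.modEq_zero_iff_dvd.2 hdvd
  obtain ⟨e, -, he⟩ := Nat.exists_mul_mod_eq_one_of_coprime
    ((Nat.coprime_comm.1 ((Nat.Prime.coprime_iff_not_dvd hp).2 hpd))) hp.one_lt
  refine ⟨e • x, ?_⟩
  calc u (e • x) = ((p ^ (n - 1) * (d * e) : ℕ) : ZMod (p ^ n)) := by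
        rw [map_nsmul, hd, nsmul_eq_mul]; push_cast; ring
    _ = ((p ^ (n - 1) * 1 : ℕ) : ZMod (p ^ n)) :=
        (natCast_pow_pred_mul_eq_iff hp.ne_zero hn).2 (he.trans (Nat.mod_eq_of_lt hp.one_lt).symm)
    _ = ((p ^ (n - 1) : ℕ) : ZMod (p ^ n)) := by rw [mul_one]

lemma mem_range_of_nsmul_eq_zero [Fact p.Prime] (hn : n ≠ 0) {X : Type*}
    [AddCommGroup X] {u : X →+ ZMod (p ^ n)} (hu : ∀ x, p • u x = 0) (hu0 : u ≠ 0)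
    {t : ZMod (p ^ n)} (ht : p • t = 0) : t ∈ u.range := by
  obtain ⟨v, hv⟩ := exists_addMonoidHom_eq_natCast_pow_pred hn u hu hu0
  obtain ⟨c, rfl⟩ := exists_eq_natCast_pow_pred_mul_of_nsmul_eq_zero (Fact.out : p.Prime).ne_zero ht
  exact ⟨c • v, by rw [map_nsmul, hv, nsmul_eq_mul]; push_cast; ring⟩

end ZMod

namespace PadicInt

variable {p : ℕ} [Fact p.Prime] {ι : Type*}

lemma toZMod_eq_zero_iff {z : ℤ_[p]} : toZMod z = 0 ↔ (p : ℤ_[p]) ∣ z := by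
  rw [← RingHom.mem_ker, ker_toZMod, maximalIdeal_eq_span_p, Ideal.mem_span_singleton]

lemma toZMod_comp_eq_zero_iff {x : ι → ℤ_[p]} : toZMod ∘ x = 0 ↔ ∃ y, p • y = x := by
  simp only [funext_iff, Function.comp_apply, Pi.zero_apply, toZMod_eq_zero_iff, dvd_def,
    Classical.skolem]
  refine exists_congr fun y => forall_congr' fun k => ?_
  rw [Pi.smul_apply, nsmul_eq_mul, eq_comm]

lemma toZMod_comp_natCast_val (w : ι → ZMod p) : toZMod ∘ (fun k => ((w k).val : ℤ_[p])) = w := by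
  ext k
  simp

end PadicInt

section H0

open PadicInt

variable {p i : ℕ} [Fact p.Prime] (hi : i ≠ 0) {ι : Type*}

noncomputable def h0Map (v : ι → ℤ_[p]) : ZMod (p ^ i) × (ι → ℤ_[p]) →+ (ι → ZMod p) where
  toFun m := toZMod ∘ m.2 + ZMod.castHom (dvd_pow_self p hi) (ZMod p) m.1 • toZMod ∘ v
  map_zero' := by simp
  map_add' m n := by
    ext k
    simp only [Prod.fst_add, Prod.snd_add, Pi.add_apply, Function.comp_apply, map_add,
      Pi.smul_apply, smul_eq_mul]
    ring

lemma h0Map_apply (v : ι → ℤ_[p]) (m : ZMod (p ^ i) × (ι → ℤ_[p])) :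
    h0Map hi v m = toZMod ∘ m.2 + ZMod.castHom (dvd_pow_self p hi) (ZMod p) m.1 • toZMod ∘ v :=
  rfl

variable {u : (ι → ℤ_[p]) →+ ZMod (p ^ i)} {v : ι → ℤ_[p]}

lemma exists_h0Map_eq (hu : ∀ x, p • u x = 0) (hv : u v = ((p ^ (i - 1) : ℕ) : ZMod (p ^ i)))
    (w : ι → ZMod p) : ∃ m, u m.2 = 0 ∧ h0Map hi v m = w := by
  have hp : p.Prime := Fact.out
  set x : ι → ℤ_[p] := fun k => ((w k).val : ℤ_[p])
  obtain ⟨c, hc⟩ := ZMod.exists_eq_natCast_pow_pred_mul_of_nsmul_eq_zero hp.ne_zero (hu x)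
  refine ⟨(c, x - c • v), ?_, ?_⟩
  · rw [map_sub, hc, map_nsmul, hv, nsmul_eq_mul]
    push_cast
    ring
  · rw [h0Map_apply, map_natCast, ← toZMod_comp_natCast_val w]
    ext k
    simp [x]

lemma h0Map_eq_zero_iff (hu : ∀ x, p • u x = 0) (hv : u v = ((p ^ (i - 1) : ℕ) : ZMod (p ^ i)))
    {m : ZMod (p ^ i) × (ι → ℤ_[p])} (hm : u m.2 = 0) :
    h0Map hi v m = 0 ↔ ∃ n, p • n = m := by
  have hp : p.Prime := Fact.out
  constructor
  · intro h
    set c := m.1.val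
    have hc : (c : ZMod (p ^ i)) = m.1 := ZMod.natCast_zmod_val m.1
    have hπ : ZMod.castHom (dvd_pow_self p hi) (ZMod p) m.1 = c := by rw [← hc, map_natCast]
    obtain ⟨y, hy⟩ : ∃ y, p • y = m.2 + c • v := by
      refine toZMod_comp_eq_zero_iff.1 ?_
      rw [h0Map_apply, hπ] at h
      rw [← h]
      ext k
      simp
    have hpc : p ∣ c := by
      have huy :
          ((p ^ (i - 1) * c : ℕ) : ZMod (p ^ i)) = ((p ^ (i - 1) * 0 : ℕ) : ZMod (p ^ i)) := by
        have := congrArg u hy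
        rw [map_nsmul, hu, map_add, hm, zero_add, map_nsmul, hv, nsmul_eq_mul] at this
        rw [mul_zero, Nat.cast_zero, this]
        push_cast
        ring
      exact Nat.modEq_zero_iff_dvd.1 ((ZMod.natCast_pow_pred_mul_eq_iff hp.ne_zero hi).1 huy)
    obtain ⟨c', hc'⟩ := hpc
    obtain ⟨y', hy'⟩ : ∃ y', p • y' = m.2 := by
      refine toZMod_comp_eq_zero_iff.1 ?_
      rw [h0Map_apply, hπ, hc'] at h
      simpa using h
    exact ⟨(c', y'), Prod.ext (by rw [← hc, hc']; simp [nsmul_eq_mul]) hy'⟩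
  · rintro ⟨n, rfl⟩
    rw [map_nsmul]
    ext k
    simp

end H0

lemma nonempty_ker_shear_sub_one_quotient_addEquiv {p i : ℕ} [Fact p.Prime] (hi : i ≠ 0)
    {ι : Type*} {u : (ι → ℤ_[p]) →+ ZMod (p ^ i)} (hu : ∀ x, p • u x = 0) (hu0 : u ≠ 0) :
    Nonempty (AddMonoidHom.ker (shear u - 1) ⧸
      (AddMonoidHom.range (p : AddMonoid.End (ZMod (p ^ i) × (ι → ℤ_[p])))).addSubgroupOf
        (AddMonoidHom.ker (shear u - 1)) ≃+ (ι → ZMod p)) := by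
  obtain ⟨v, hv⟩ := ZMod.exists_addMonoidHom_eq_natCast_pow_pred hi u hu hu0
  set K := AddMonoidHom.ker (shear u - 1)
  let Φ := (h0Map hi v).comp K.subtype
  have hΦ : Function.Surjective Φ := fun w => by
    obtain ⟨m, hm, rfl⟩ := exists_h0Map_eq hi hu hv w
    exact ⟨⟨m, (mem_ker_shear_sub_one u).2 hm⟩, rfl⟩
  have hker : (AddMonoidHom.range (p : AddMonoid.End _)).addSubgroupOf K = Φ.ker := by
    ext ⟨m, hm⟩
    exact (h0Map_eq_zero_iff hi hu hv ((mem_ker_shear_sub_one u).1 hm)).symm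
  exact ⟨(QuotientAddGroup.quotientAddEquivOfEq hker).trans
    (QuotientAddGroup.quotientKerEquivOfSurjective Φ hΦ)⟩

theorem stmt_6_general (p i a : ℕ) [Fact p.Prime] (hp : Odd p) (hi : 1 ≤ i)
    (u : (Fin a → ℤ_[p]) →+ ZMod (p ^ i))
    (hu_tors : ∀ x, p • u x = 0) (hu_ne : u ≠ 0)
    (τ : AddMonoid.End (ZMod (p ^ i) × (Fin a → ℤ_[p])))
    (hτ : ∀ m, τ m = (m.1 + u m.2, m.2))
    (N : AddMonoid.End (ZMod (p ^ i) × (Fin a → ℤ_[p])))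
    (hN : N = ∑ j ∈ Finset.range p, τ ^ j) :
    -- the norm is multiplication by p in both coordinates
    (∀ m : ZMod (p ^ i) × (Fin a → ℤ_[p]),
        N m = ((p : ZMod (p ^ i)) * m.1, fun k => (p : ℤ_[p]) * m.2 k)) ∧
    -- Ĥ⁰(G, M_u) = M^G / N(M) ≅ 𝔽_p^a
    Nonempty
      ((↥(AddMonoidHom.ker (τ - 1)) ⧸
          ((AddMonoidHom.range (N : _ →+ _)).addSubgroupOf
            (AddMonoidHom.ker (τ - 1)))) ≃+ (Fin a → ZMod p)) ∧
    -- H¹(G, M_u) = ker N / (τ - 1) M = 0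
    Subsingleton
      (↥(AddMonoidHom.ker (N : _ →+ _)) ⧸
        ((AddMonoidHom.range (τ - 1)).addSubgroupOf
          (AddMonoidHom.ker (N : _ →+ _)))) := by
  have hp0 : p ≠ 0 := (Fact.out : p.Prime).ne_zero
  obtain rfl : τ = shear u := AddMonoidHom.ext hτ
  obtain rfl : N = p := hN.trans (sum_range_shear_pow u hp hu_tors)
  refine ⟨fun m => ?_, nonempty_ker_shear_sub_one_quotient_addEquiv (by omega) hu_tors hu_ne, ?_⟩
  · ext <;> simp [nsmul_eq_mul]
  · have hle := ker_natCast_le_range_shear_sub_one u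
      (fun x hx => (smul_eq_zero.1 hx).resolve_left hp0)
      (fun t ht => ZMod.mem_range_of_nsmul_eq_zero (by omega) hu_tors hu_ne ht)
    rw [AddSubgroup.addSubgroupOf_eq_top.2 hle]
    exact QuotientAddGroup.subsingleton_quotient_top

theorem stmt_6 (p i a : ℕ) [Fact p.Prime] (hp : Odd p) (hi : 1 ≤ i) (ha : 1 ≤ a)
    (u : (Fin a → ℤ_[p]) →+ ZMod (p ^ i))
    (hu_tors : ∀ x, p • u x = 0) (hu_ne : u ≠ 0)
    (τ : AddMonoid.End (ZMod (p ^ i) × (Fin a → ℤ_[p])))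
    (hτ : ∀ m, τ m = (m.1 + u m.2, m.2))
    (N : AddMonoid.End (ZMod (p ^ i) × (Fin a → ℤ_[p])))
    (hN : N = ∑ j ∈ Finset.range p, τ ^ j) :
    -- the norm is multiplication by p in both coordinates
    (∀ m : ZMod (p ^ i) × (Fin a → ℤ_[p]),
        N m = ((p : ZMod (p ^ i)) * m.1, fun k => (p : ℤ_[p]) * m.2 k)) ∧
    -- Ĥ⁰(G, M_u) = M^G / N(M) ≅ 𝔽_p^a
    Nonempty
      ((↥(AddMonoidHom.ker (τ - 1)) ⧸
          ((AddMonoidHom.range (N : _ →+ _)).addSubgroupOf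
            (AddMonoidHom.ker (τ - 1)))) ≃+ (Fin a → ZMod p)) ∧
    -- H¹(G, M_u) = ker N / (τ - 1) M = 0
    Subsingleton
      (↥(AddMonoidHom.ker (N : _ →+ _)) ⧸
        ((AddMonoidHom.range (τ - 1)).addSubgroupOf
          (AddMonoidHom.ker (N : _ →+ _)))) :=
  stmt_6_general p i a hp hi u hu_tors hu_ne τ hτ N hN
end

section
/- Let G be a finite group, X a G-module, and I a normal subgroup of G. Then there is an exact sequence H^{-1}_hat(G,X) -> H^{-1}_hat(G/I, X^I) -> H^0_hat(I,X)_{G/I} -> H^0_hat(G,X) -> H^0_hat(G/I, X^I) -> 0, where the subscript G/I denotes coinvariants. In particular, if X^I is cohomologically trivial as a G/I-module, then H^0_hat(G,X) is isomorphic to the G/I-coinvariants of H^0_hat(I,X). -/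
/-!
The norm of `G` factors as `N_G = N_{G/I} ∘ N_I`, where `N_I` takes values in `X^I`, and on `X^I`
the map `N_{G/I}` takes values in `X^G` and kills `I_{G/I} X^I`. Each assertion is then an
elementwise diagram chase for a composite of two additive maps, as in the kernel–cokernel
sequence of `N_{G/I} ∘ N_I`.
-/

open Finset

section Composite

variable {X : Type*} [AddCommGroup X] {N₁ N₂ : X →+ X} {V A : AddSubgroup X}

lemma mem_range_sup_iff_of_map_eq_zero (hA : A ≤ N₂.ker) {x : X} (hx : N₂ x = 0) :
    x ∈ N₁.range ⊔ A ↔ ∃ y, (N₂.comp N₁) y = 0 ∧ x - N₁ y ∈ A := by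
  refine ⟨fun hmem ↦ ?_, fun ⟨y, _, hy⟩ ↦ ?_⟩
  · obtain ⟨_, ⟨y, rfl⟩, a, ha, rfl⟩ := AddSubgroup.mem_sup.mp hmem
    refine ⟨y, ?_, by simpa using ha⟩
    rwa [map_add, AddMonoidHom.mem_ker.mp (hA ha), add_zero] at hx
  · exact AddSubgroup.mem_sup.mpr ⟨N₁ y, ⟨y, rfl⟩, _, hy, add_sub_cancel _ _⟩

lemma map_mem_range_comp_iff (hN₁ : N₁.range ≤ V) (hA : A ≤ N₂.ker) {x : X} (hx : x ∈ V) :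
    N₂ x ∈ (N₂.comp N₁).range ↔ ∃ y ∈ V, N₂ y = 0 ∧ x - y ∈ N₁.range ⊔ A := by
  refine ⟨fun ⟨w, hw⟩ ↦ ⟨x - N₁ w, sub_mem hx (hN₁ ⟨w, rfl⟩), ?_, ?_⟩, fun ⟨y, _, hy, hxy⟩ ↦ ?_⟩
  · rw [map_sub, ← hw, AddMonoidHom.comp_apply, sub_self]
  · exact AddSubgroup.mem_sup_left ⟨w, by abel⟩
  · obtain ⟨_, ⟨w, rfl⟩, a, ha, hsum⟩ := AddSubgroup.mem_sup.mp hxy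
    refine ⟨w, ?_⟩
    rw [show x = y + (N₁ w + a) by rw [hsum]; abel, map_add, map_add, hy,
      AddMonoidHom.mem_ker.mp (hA ha), zero_add, add_zero, AddMonoidHom.comp_apply]

lemma exists_mem_eq_map_iff (hN₁ : N₁.range ≤ V) {x : X} :
    (∃ z ∈ V, x = N₂ z) ↔ ∃ y ∈ V, x - N₂ y ∈ (N₂.comp N₁).range := by
  refine ⟨fun ⟨z, hz, hxz⟩ ↦ ⟨z, hz, by rw [hxz, sub_self]; exact zero_mem _⟩,
    fun ⟨y, hy, w, hw⟩ ↦ ⟨y + N₁ w, add_mem hy (hN₁ ⟨w, rfl⟩), ?_⟩⟩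
  rw [map_add, ← AddMonoidHom.comp_apply, hw, add_sub_cancel]

lemma mem_range_sup_of_map_mem_range_comp (hN₁ : N₁.range ≤ V) (hA : A ≤ N₂.ker)
    (hV : ∀ y ∈ V, N₂ y = 0 → y ∈ A) {x : X} (hx : x ∈ V) (h : N₂ x ∈ (N₂.comp N₁).range) :
    x ∈ N₁.range ⊔ A := by
  obtain ⟨y, hy, hy0, hxy⟩ := (map_mem_range_comp_iff hN₁ hA hx).mp h
  simpa using add_mem hxy (AddSubgroup.mem_sup_right (hV y hy hy0))

end Composite

lemma QuotientGroup.bijective_out_mul {G : Type*} [Group G] (I : Subgroup G) :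
    Function.Bijective fun p : (G ⧸ I) × I ↦ p.1.out * p.2 := by
  refine ⟨fun ⟨q, h⟩ ⟨q', h'⟩ e ↦ ?_, fun g ↦ ?_⟩
  · have hq : q = q' := by
      simpa only [QuotientGroup.mk_mul_of_mem _ h.2, QuotientGroup.mk_mul_of_mem _ h'.2,
        QuotientGroup.out_eq'] using congrArg ((↑) : G → G ⧸ I) e
    subst hq
    simpa using e
  · refine ⟨⟨g, ⟨(g : G ⧸ I).out⁻¹ * g, ?_⟩⟩, mul_inv_cancel_left _ _⟩
    rw [← QuotientGroup.eq, QuotientGroup.out_eq']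

section Norms

variable {G : Type*} [Group G] {X : Type*} [AddCommGroup X] [DistribMulAction G X]

variable (X) in
def Subgroup.fixedAddSubgroup (I : Subgroup G) : AddSubgroup X where
  carrier := {x | ∀ h ∈ I, h • x = x}
  zero_mem' _ _ := smul_zero _
  add_mem' hx hy h hh := by rw [smul_add, hx h hh, hy h hh]
  neg_mem' hx h hh := by rw [smul_neg, hx h hh]

variable {I : Subgroup G}

lemma smul_eq_smul_of_mk_eq {x : X} (hx : x ∈ I.fixedAddSubgroup X) {a b : G}
    (hab : (a : G ⧸ I) = b) : a • x = b • x := by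
  rw [eq_comm, QuotientGroup.eq] at hab
  rw [← mul_inv_cancel_left b a, mul_smul, hx _ hab]

variable (G X) in
noncomputable def groupNormHom [Fintype G] : X →+ X :=
  ∑ g : G, DistribSMul.toAddMonoidHom X g

variable (X) in
noncomputable def Subgroup.normHom (I : Subgroup G) [Fintype I] : X →+ X :=
  ∑ h : I, DistribSMul.toAddMonoidHom X (h : G)

variable (X) in
noncomputable def Subgroup.quotientNormHom (I : Subgroup G) [Fintype (G ⧸ I)] : X →+ X :=
  ∑ q : G ⧸ I, DistribSMul.toAddMonoidHom X q.out

@[simp]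
lemma groupNormHom_apply [Fintype G] (x : X) : groupNormHom G X x = ∑ g : G, g • x := by
  simp [groupNormHom, AddMonoidHom.finsetSum_apply]

@[simp]
lemma Subgroup.normHom_apply [Fintype I] (x : X) : I.normHom X x = ∑ h : I, (h : G) • x := by
  simp [normHom, AddMonoidHom.finsetSum_apply]

@[simp]
lemma Subgroup.quotientNormHom_apply [Fintype (G ⧸ I)] (x : X) :
    I.quotientNormHom X x = ∑ q : G ⧸ I, q.out • x := by
  simp [quotientNormHom, AddMonoidHom.finsetSum_apply]

lemma Subgroup.range_normHom_le [Fintype I] : (I.normHom X).range ≤ I.fixedAddSubgroup X := by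
  rintro _ ⟨x, rfl⟩ h hh
  rw [normHom_apply, smul_sum]
  exact Fintype.sum_equiv (Equiv.mulLeft ⟨h, hh⟩) _ _ fun g ↦ by simp [mul_smul]

lemma groupNormHom_eq_comp [Fintype G] [Fintype I] [Fintype (G ⧸ I)] :
    groupNormHom G X = (I.quotientNormHom X).comp (I.normHom X) := by
  ext x
  simp only [groupNormHom_apply, AddMonoidHom.comp_apply, Subgroup.quotientNormHom_apply,
    Subgroup.normHom_apply, smul_sum, ← mul_smul, ← Fintype.sum_prod_type']
  exact (Fintype.sum_bijective _ (QuotientGroup.bijective_out_mul I) _ _ fun _ ↦ rfl).symm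

lemma Subgroup.smul_quotientNormHom [Fintype (G ⧸ I)] {x : X} (hx : x ∈ I.fixedAddSubgroup X)
    (g : G) : g • I.quotientNormHom X x = I.quotientNormHom X x := by
  rw [quotientNormHom_apply, smul_sum]
  refine Fintype.sum_equiv (MulAction.toPerm g) _ _ fun q ↦ ?_
  rw [← mul_smul]
  refine smul_eq_smul_of_mk_eq hx ?_
  rw [QuotientGroup.out_eq']
  exact MulAction.Quotient.mk_smul_out I g q

lemma Subgroup.quotientNormHom_smul [I.Normal] [Fintype (G ⧸ I)] {x : X}
    (hx : x ∈ I.fixedAddSubgroup X) (g : G) :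
    I.quotientNormHom X (g • x) = I.quotientNormHom X x := by
  simp only [quotientNormHom_apply, ← mul_smul]
  refine Fintype.sum_equiv (Equiv.mulRight (g : G ⧸ I)) _ _ fun q ↦ ?_
  exact smul_eq_smul_of_mk_eq hx (by simp)

lemma Subgroup.closure_le_ker_quotientNormHom [I.Normal] [Fintype (G ⧸ I)] :
    AddSubgroup.closure {y | ∃ (g : G) (z : X), (∀ h ∈ I, h • z = z) ∧ y = g • z - z} ≤
      (I.quotientNormHom X).ker := by
  rw [AddSubgroup.closure_le]
  rintro _ ⟨g, z, hz, rfl⟩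
  rw [SetLike.mem_coe, AddMonoidHom.mem_ker, map_sub, quotientNormHom_smul hz, sub_self]

end Norms

theorem stmt_9 (G : Type) [Group G] [Fintype G]
    (X : Type) [AddCommGroup X] [DistribMulAction G X]
    (I : Subgroup G) [I.Normal] [Fintype ↥I] [Fintype (G ⧸ I)]
    (Ng NI NgQ : X →+ X)
    (hNg : Ng = ∑ g : G, DistribMulAction.toAddMonoidHom X g)
    (hNI : NI = ∑ g : ↥I, DistribMulAction.toAddMonoidHom X (g : G))
    (hNgQ : NgQ = ∑ q : G ⧸ I, DistribMulAction.toAddMonoidHom X q.out)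
    (augQ : AddSubgroup X)
    (haugQ : augQ = AddSubgroup.closure
      {y | ∃ (g : G) (z : X), (∀ h ∈ I, h • z = z) ∧ y = g • z - z}) :
    -- the map Ĥ⁻¹(G,X) → Ĥ⁻¹(G/I, X^I) induced by N_I is well defined
    (∀ x : X, Ng x = 0 → (∀ h ∈ I, h • NI x = NI x) ∧ NgQ (NI x) = 0) ∧
    -- exactness at Ĥ⁻¹(G/I, X^I)
    (∀ x : X, (∀ h ∈ I, h • x = x) → NgQ x = 0 →
      ((x ∈ NI.range ⊔ augQ) ↔ ∃ y : X, Ng y = 0 ∧ x - NI y ∈ augQ)) ∧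
    -- the map Ĥ⁰(I,X)_{G/I} → Ĥ⁰(G,X) induced by N_{G/I} is well defined
    (∀ x : X, (∀ h ∈ I, h • x = x) → ∀ g : G, g • NgQ x = NgQ x) ∧
    -- exactness at Ĥ⁰(I,X)_{G/I}
    (∀ x : X, (∀ h ∈ I, h • x = x) →
      ((NgQ x ∈ Ng.range) ↔
        ∃ y : X, (∀ h ∈ I, h • y = y) ∧ NgQ y = 0 ∧ x - y ∈ NI.range ⊔ augQ)) ∧
    -- exactness at Ĥ⁰(G,X)
    (∀ x : X, (∀ g : G, g • x = x) →
      ((∃ z : X, (∀ h ∈ I, h • z = z) ∧ x = NgQ z) ↔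
        ∃ y : X, (∀ h ∈ I, h • y = y) ∧ x - NgQ y ∈ Ng.range)) ∧
    -- surjectivity onto Ĥ⁰(G/I, X^I)
    (∀ x : X, (∀ g : G, g • x = x) →
      ∃ y : X, (∀ g : G, g • y = y) ∧
        ∃ z : X, (∀ h ∈ I, h • z = z) ∧ x - y = NgQ z) ∧
    -- in particular: if X^I is cohomologically trivial over G/I (in the
    -- relevant degrees), Ĥ⁰(G,X) ≅ Ĥ⁰(I,X)_{G/I} via N_{G/I}
    (((∀ x : X, (∀ h ∈ I, h • x = x) → NgQ x = 0 → x ∈ augQ) ∧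
      (∀ x : X, (∀ g : G, g • x = x) → ∃ z : X, (∀ h ∈ I, h • z = z) ∧ x = NgQ z)) →
      ((∀ x : X, (∀ g : G, g • x = x) →
          ∃ y : X, (∀ h ∈ I, h • y = y) ∧ x - NgQ y ∈ Ng.range) ∧
       (∀ y : X, (∀ h ∈ I, h • y = y) → NgQ y ∈ Ng.range →
          y ∈ NI.range ⊔ augQ))) := by
  obtain rfl : Ng = NgQ.comp NI := by rw [hNg, hNI, hNgQ]; exact groupNormHom_eq_comp
  have hN₁ : NI.range ≤ I.fixedAddSubgroup X := hNI ▸ I.range_normHom_le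
  have hA : augQ ≤ NgQ.ker := by rw [hNgQ, haugQ]; exact I.closure_le_ker_quotientNormHom
  have hN₂ : ∀ x ∈ I.fixedAddSubgroup X, ∀ g : G, g • NgQ x = NgQ x := by
    rw [hNgQ]; exact fun x hx ↦ I.smul_quotientNormHom hx
  refine ⟨fun x hx ↦ ⟨hN₁ ⟨x, rfl⟩, hx⟩, fun x _ hx ↦ mem_range_sup_iff_of_map_eq_zero hA hx,
    hN₂, fun x hx ↦ map_mem_range_comp_iff hN₁ hA hx, fun x _ ↦ exists_mem_eq_map_iff hN₁,
    fun x hx ↦ ?_, fun ⟨hHm1, hH0⟩ ↦ ⟨fun x hx ↦ (exists_mem_eq_map_iff hN₁).mp (hH0 x hx),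
      fun y hy ↦ mem_range_sup_of_map_mem_range_comp hN₁ hA hHm1 hy⟩⟩
  have hxI : x ∈ I.fixedAddSubgroup X := fun h _ ↦ hx h
  exact ⟨x - NgQ x, fun g ↦ by rw [smul_sub, hx, hN₂ x hxI], x, hxI, sub_sub_cancel _ _⟩
end

section
/- Let p be an odd prime, m a divisor of p-1, and G the metacyclic group of order pm with presentation <tau, sigma | tau^p = sigma^m = 1, sigma tau sigma^{-1} = tau^r> where r has multiplicative order m modulo p. For 0 <= i < m, let A{i} be the Z_p[G]-lattice Z_p[zeta] (zeta a primitive p-th root of unity) with tau acting by multiplication by zeta twisted so that sigma acts by zeta^j -> xi^i zeta^{rj}, where xi in Z_p is the primitive m-th root of unity congruent to r mod p. Then for each 0 <= i < m there is a short exact sequence of Z_p[G]-modules 0 -> A{i+1} -> A{i} -> F_p{i} -> 0, where F_p{i} is the 1-dimensional F_p-module on which tau acts trivially and sigma acts by multiplication by xi^i mod p. -/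
/-!
Write `π = ζ - 1` and `η = ξ⁻¹`, so that `w = ∑_{j<m} η^j ζ^{r^j}` is the Lagrange resolvent of
`ζ` for the cyclic action `ζ ↦ ζ^r`; shifting the summation index gives `σ w = ξ w`.
Expanding `ζ^{r^j} = (1 + π)^{r^j} ≡ 1 + r^j π mod π²` and using `∑_j η^j = 0` together with
`η r ≡ 1 mod π` (because `π ∣ p ∣ ξ - r`) yields `w ≡ m π mod π²`. As `m` is a unit of the local
ring `R`, `w` is an associate of `π`, so `R/(w) = R/(π)` has `p` elements. Such a quotient is
spanned by the image of `ℕ`, on which `σ` is the identity, and `σ` preserves `(π)`; hence `σ`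
acts trivially on `R/(w)`, while `τ`, multiplication by `ζ = 1 + π`, does so by construction.
-/

open Finset

section LagrangeResolvent

variable {R : Type*} [CommRing R]

def lagrangeResolvent (η ζ : R) (r m : ℕ) : R :=
  ∑ j ∈ range m, η ^ j * ζ ^ r ^ j

theorem mul_map_lagrangeResolvent (σ : R →+* R) {η ζ : R} {r m : ℕ} (hση : σ η = η)
    (hσζ : σ ζ = ζ ^ r) (hηm : η ^ m = 1) (hζrm : ζ ^ r ^ m = ζ) :
    η * σ (lagrangeResolvent η ζ r m) = lagrangeResolvent η ζ r m := by
  set f : ℕ → R := fun j => η ^ j * ζ ^ r ^ j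
  have hstep : ∀ j, η * σ (f j) = f (j + 1) := fun j => by
    simp only [f, map_mul, map_pow, hση, hσζ, ← pow_mul, pow_succ]
    ring
  have hperiodic : f m = f 0 := by simp [f, hηm, hζrm]
  have hshift := (sum_range_succ' f m).symm.trans (sum_range_succ f m)
  rw [hperiodic, add_left_inj] at hshift
  simp only [lagrangeResolvent, map_sum, mul_sum]
  change ∑ j ∈ range m, η * σ (f j) = ∑ j ∈ range m, f j
  simp only [hstep]
  exact hshift

theorem sq_sub_one_dvd_lagrangeResolvent_sub [IsDomain R] {η ζ : R} {r m : ℕ}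
    (hη : IsPrimitiveRoot η m) (hm : 1 < m) (hηr : ζ - 1 ∣ η * r - 1) :
    (ζ - 1) ^ 2 ∣ lagrangeResolvent η ζ r m - m * (ζ - 1) := by
  set π := ζ - 1
  have hζ : ζ = 1 + π := by ring
  have hexpand : ∀ n : ℕ, π ^ 2 ∣ ζ ^ n - π * n - 1 := fun n => by
    simpa only [← hζ, one_pow, one_mul] using sq_dvd_add_pow_sub_sub π 1 n
  have hterm : ∀ j, η ^ j * ζ ^ r ^ j - π =
      η ^ j * (ζ ^ r ^ j - π * (r ^ j : ℕ) - 1) + π * ((η * r) ^ j - 1) + η ^ j := fun j => by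
    push_cast
    ring
  have hsplit :
      lagrangeResolvent η ζ r m - m * π = ∑ j ∈ range m, (η ^ j * ζ ^ r ^ j - π) := by
    simp [lagrangeResolvent, sum_sub_distrib]
  rw [hsplit, sum_congr rfl fun j _ => hterm j, sum_add_distrib, sum_add_distrib,
    hη.geom_sum_eq_zero hm, add_zero, ← mul_sum]
  refine dvd_add (dvd_sum fun j _ => dvd_mul_of_dvd_right (hexpand _) _) ?_
  rw [sq]
  exact mul_dvd_mul_left π (dvd_sum fun j _ => hηr.trans (sub_one_dvd_pow_sub_one _ j))

theorem map_lagrangeResolvent_inv (σ : R →+* R) {ξ : Rˣ} {ζ : R} {r m : ℕ}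
    (hσξ : σ ξ = ξ) (hσζ : σ ζ = ζ ^ r) (hξm : ξ ^ m = 1) (hζrm : ζ ^ r ^ m = ζ) :
    σ (lagrangeResolvent ↑ξ⁻¹ ζ r m) = ξ * lagrangeResolvent ↑ξ⁻¹ ζ r m := by
  have hσξinv : σ ↑ξ⁻¹ = ↑ξ⁻¹ := by
    have h := congrArg σ ξ.inv_mul
    rw [map_mul, hσξ, map_one] at h
    exact Units.mul_eq_one_iff_eq_inv.mp h
  have hξinvm : (↑ξ⁻¹ : R) ^ m = 1 := by
    rw [← Units.val_pow_eq_pow_val, inv_pow, hξm, inv_one, Units.val_one]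
  set L := lagrangeResolvent (↑ξ⁻¹ : R) ζ r m
  calc σ L = ξ * (↑ξ⁻¹ * σ L) := by rw [← mul_assoc, Units.mul_inv, one_mul]
    _ = ξ * L := by rw [mul_map_lagrangeResolvent σ hσξinv hσζ hξinvm hζrm]

end LagrangeResolvent

theorem IsPrimitiveRoot.pow_pow_orderOf_eq {M : Type*} [CommMonoid M] {ζ : M} {p : ℕ}
    (hζ : IsPrimitiveRoot ζ p) (r : ℕ) : ζ ^ r ^ orderOf (r : ZMod p) = ζ := by
  have h : r ^ orderOf (r : ZMod p) % p = 1 % p := by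
    rw [← Nat.ModEq, ← ZMod.natCast_eq_natCast_iff]
    push_cast
    exact pow_orderOf_eq_one _
  rw [← pow_mod_orderOf, ← hζ.eq_orderOf, h, hζ.eq_orderOf, pow_mod_orderOf, pow_one]

theorem associated_of_sq_dvd_sub_mul {R : Type*} [CommRing R] [IsLocalRing R] {π w a : R}
    (ha : IsUnit a) (hπ : ¬IsUnit π) (h : π ^ 2 ∣ w - a * π) : Associated π w := by
  obtain ⟨c, hc⟩ := h
  have hw : w = π * (a + π * c) := by linear_combination hc
  have hπc : π * c ∈ IsLocalRing.maximalIdeal R :=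
    Ideal.mul_mem_right _ _ ((IsLocalRing.mem_maximalIdeal π).mpr hπ)
  have hunit : IsUnit (a + π * c) := by
    rw [← IsLocalRing.notMem_maximalIdeal]
    intro hmem
    refine IsLocalRing.notMem_maximalIdeal.mpr ha ?_
    simpa using Ideal.sub_mem _ hmem hπc
  exact hw ▸ associated_mul_unit_right π _ hunit

theorem Ideal.natCast_card_quotient_mem {R : Type*} [CommRing R] (I : Ideal R) :
    (Nat.card (R ⧸ I) : R) ∈ I := by
  cases finite_or_infinite (R ⧸ I)
  · have := Fintype.ofFinite (R ⧸ I)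
    rw [← Ideal.Quotient.eq_zero_iff_mem, map_natCast, Nat.card_eq_fintype_card,
      Nat.cast_card_eq_zero]
  · rw [Nat.card_eq_zero_of_infinite, Nat.cast_zero]
    exact I.zero_mem

theorem exists_natCast_eq_of_natCard_eq_prime {S : Type*} [Ring S] {p : ℕ} (hp : p.Prime)
    (hcard : Nat.card S = p) (x : S) : ∃ n : ℕ, (n : S) = x := by
  have : Finite S := Nat.finite_of_card_ne_zero (hcard ▸ hp.ne_zero)
  have := Fintype.ofFinite S
  have : NeZero p := ⟨hp.ne_zero⟩
  let e := ZMod.ringEquivOfPrime S hp (Nat.card_eq_fintype_card (α := S) ▸ hcard)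
  obtain ⟨n, hn⟩ := ZMod.natCast_zmod_surjective (e.symm x)
  exact ⟨n, by rw [← map_natCast e, hn, RingEquiv.apply_symm_apply]⟩

theorem sub_mem_of_le_comap_of_natCard_quotient_eq_prime {R : Type*} [CommRing R]
    (σ : R →+* R) {I : Ideal R} (hσI : I ≤ I.comap σ) {p : ℕ} (hp : p.Prime)
    (hcard : Nat.card (R ⧸ I) = p) (x : R) : σ x - x ∈ I := by
  obtain ⟨n, hn⟩ := exists_natCast_eq_of_natCard_eq_prime hp hcard (Ideal.Quotient.mk I x)
  have hx : x - n ∈ I := by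
    rw [← Ideal.Quotient.eq, ← hn, map_natCast]
  have hσx : σ x - n ∈ I := by simpa using hσI hx
  simpa using I.sub_mem hσx hx

theorem Function.exact_mul_quotient_mk_span_singleton {R : Type*} [CommRing R] (w : R) :
    Function.Exact (fun x : R => w * x) (Ideal.Quotient.mk (Ideal.span {w})) := fun y => by
  simp only [Ideal.Quotient.eq_zero_iff_mem, Ideal.mem_span_singleton', Set.mem_range, mul_comm]

theorem stmt_10_general (p m r i : ℕ) [Fact p.Prime]
    (hm1 : 1 < m) (hr : orderOf (r : ZMod p) = m)
    (R : Type) [CommRing R] [IsDomain R] [IsDiscreteValuationRing R]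
    (ζ : R) (hζ : IsPrimitiveRoot ζ p) (hζnu : ¬ IsUnit (ζ - 1))
    (hcard : Nat.card (R ⧸ Ideal.span {ζ - 1}) = p)
    (ξ : Rˣ) (hξ : IsPrimitiveRoot (ξ : R) m)
    (hξr : (p : R) ∣ (ξ : R) - (r : R)) (hmu : IsUnit (m : R))
    (σ : R →+* R) (hσζ : σ ζ = ζ ^ r) (hσξ : σ (ξ : R) = ξ)
    (w : R) (hw : w = ∑ j ∈ Finset.range m, ((ξ ^ (-(j : ℤ)) : Rˣ) : R) * ζ ^ (r ^ j)) :
    -- σ w = ξ w, i.e. multiplication by w is σ-equivariant A{i+1} → A{i}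
    σ w = (ξ : R) * w ∧
    -- 0 → A{i+1} → A{i} : injectivity of multiplication by w
    Function.Injective (fun x : R => w * x) ∧
    -- exactness against the projection onto the quotient, which is surjective
    Function.Exact (fun x : R => w * x) (Ideal.Quotient.mk (Ideal.span {w})) ∧
    Function.Surjective (Ideal.Quotient.mk (Ideal.span {w})) ∧
    -- the quotient is 𝔽_p
    Nat.card (R ⧸ Ideal.span {w}) = p ∧
    -- τ acts trivially on the quotient
    (∀ x : R, ζ * x - x ∈ Ideal.span {w}) ∧
    -- σ acts on the quotient by multiplication by ξ^i
    (∀ x : R, (ξ : R) ^ i * σ x - (ξ : R) ^ i * x ∈ Ideal.span {w}) := by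
  have hξ' : IsPrimitiveRoot ξ m := IsPrimitiveRoot.coe_units_iff.mp hξ
  have hwL : w = lagrangeResolvent ↑ξ⁻¹ ζ r m := by
    simp [hw, lagrangeResolvent, zpow_neg]
  have hσw : σ w = ξ * w := hwL ▸
    map_lagrangeResolvent_inv σ hσξ hσζ hξ'.pow_eq_one (hr ▸ hζ.pow_pow_orderOf_eq r)
  have hπp : ζ - 1 ∣ p :=
    Ideal.mem_span_singleton.mp (hcard ▸ Ideal.natCast_card_quotient_mem _)
  have hξinvr : ζ - 1 ∣ ↑ξ⁻¹ * r - 1 := by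
    have h := (hπp.trans hξr).mul_left ↑ξ⁻¹
    rwa [mul_sub, Units.inv_mul, ← dvd_neg, neg_sub] at h
  have hξinv : IsPrimitiveRoot (↑ξ⁻¹ : R) m := IsPrimitiveRoot.coe_units_iff.mpr hξ'.inv
  have hassoc : Associated (ζ - 1) w := associated_of_sq_dvd_sub_mul hmu hζnu
    (hwL ▸ sq_sub_one_dvd_lagrangeResolvent_sub hξinv hm1 hξinvr)
  have hspan : Ideal.span {w} = Ideal.span {ζ - 1} :=
    Ideal.span_singleton_eq_span_singleton.mpr hassoc.symm
  have hw0 : w ≠ 0 :=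
    hassoc.ne_zero_iff.mp (sub_ne_zero.mpr (hζ.ne_one (Fact.out : p.Prime).one_lt))
  have hσπ : Ideal.span {ζ - 1} ≤ (Ideal.span {ζ - 1}).comap σ := by
    rw [Ideal.span_singleton_le_iff_mem, Ideal.mem_comap, Ideal.mem_span_singleton, map_sub,
      map_one, hσζ]
    exact sub_one_dvd_pow_sub_one ζ r
  refine ⟨hσw, mul_right_injective₀ hw0, Function.exact_mul_quotient_mk_span_singleton w,
    Ideal.Quotient.mk_surjective, hspan ▸ hcard, fun x => ?_, fun x => ?_⟩
  · rw [hspan, ← sub_one_mul]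
    exact Ideal.mul_mem_right _ _ (Ideal.mem_span_singleton_self _)
  · rw [hspan, ← mul_sub]
    exact Ideal.mul_mem_left _ _
      (sub_mem_of_le_comap_of_natCard_quotient_eq_prime σ hσπ Fact.out hcard x)

theorem stmt_10 (p m r i : ℕ) [Fact p.Prime] (hp : Odd p)
    (hm : m ∣ p - 1) (hm1 : 1 < m) (hr : orderOf (r : ZMod p) = m)
    (R : Type) [CommRing R] [IsDomain R] [IsDiscreteValuationRing R]
    (ζ : R) (hζ : IsPrimitiveRoot ζ p) (hζnu : ¬ IsUnit (ζ - 1))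
    (hcard : Nat.card (R ⧸ Ideal.span {ζ - 1}) = p)
    (ξ : Rˣ) (hξ : IsPrimitiveRoot (ξ : R) m)
    (hξr : (p : R) ∣ (ξ : R) - (r : R)) (hmu : IsUnit (m : R))
    (σ : R →+* R) (hσζ : σ ζ = ζ ^ r) (hσξ : σ (ξ : R) = ξ)
    (w : R) (hw : w = ∑ j ∈ Finset.range m, ((ξ ^ (-(j : ℤ)) : Rˣ) : R) * ζ ^ (r ^ j)) :
    -- σ w = ξ w, i.e. multiplication by w is σ-equivariant A{i+1} → A{i}
    σ w = (ξ : R) * w ∧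
    -- 0 → A{i+1} → A{i} : injectivity of multiplication by w
    Function.Injective (fun x : R => w * x) ∧
    -- exactness against the projection onto the quotient, which is surjective
    Function.Exact (fun x : R => w * x) (Ideal.Quotient.mk (Ideal.span {w})) ∧
    Function.Surjective (Ideal.Quotient.mk (Ideal.span {w})) ∧
    -- the quotient is 𝔽_p
    Nat.card (R ⧸ Ideal.span {w}) = p ∧
    -- τ acts trivially on the quotient
    (∀ x : R, ζ * x - x ∈ Ideal.span {w}) ∧
    -- σ acts on the quotient by multiplication by ξ^i
    (∀ x : R, (ξ : R) ^ i * σ x - (ξ : R) ^ i * x ∈ Ideal.span {w}) :=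
  stmt_10_general p m r i hm1 hr R ζ hζ hζnu hcard ξ hξ hξr hmu σ hσζ hσξ w hw
end

section
/- Let p be an odd prime, m a divisor of p-1, and G the metacyclic group of order pm as above. The element w = sum_{j=0}^{m-1} xi^{-j} zeta^{r^j} in Z_p[zeta] satisfies w congruent to m(zeta - 1) modulo (zeta-1)^2, and in particular w is a uniformizer times a unit: its (zeta-1)-adic valuation is exactly 1. -/
/-!
Write `t = ζ - 1` and `u = ξ⁻¹`. Modulo `t²` every power `ζ ^ k` is `1 + k t`, so
`w ≡ ∑ u^j + (∑ u^j r^j) t`. The first sum vanishes since `u` is a nontrivial `m`-th root of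
unity, and `u^j r^j ≡ u^j ξ^j = 1` modulo `p`, which is divisible by `t`; hence
`w ≡ m t mod t²`. As `m` is a unit and `t` is not, this pins the `t`-adic valuation of `w` at `1`.
-/

open Finset

section

variable {R : Type*} [CommRing R]

theorem sub_one_sq_dvd_pow_sub_one_sub_mul (x : R) (n : ℕ) :
    (x - 1) ^ 2 ∣ x ^ n - 1 - n * (x - 1) := by
  induction n with
  | zero => simp
  | succ n ih =>
    have hstep : x ^ (n + 1) - 1 - ((n + 1 : ℕ) : R) * (x - 1)
        = x * (x ^ n - 1 - n * (x - 1)) + n * (x - 1) ^ 2 := by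
      push_cast; ring
    rw [hstep]
    exact dvd_add (dvd_mul_of_dvd_right ih x) (dvd_mul_left _ _)

theorem sub_one_sq_dvd_sum_mul_pow_sub {ι : Type*} (s : Finset ι) (a : ι → R) (e : ι → ℕ)
    (x : R) :
    (x - 1) ^ 2 ∣ ∑ i ∈ s, a i * x ^ e i - ∑ i ∈ s, a i - (∑ i ∈ s, a i * e i) * (x - 1) := by
  have hsum : ∑ i ∈ s, a i * x ^ e i - ∑ i ∈ s, a i - (∑ i ∈ s, a i * e i) * (x - 1)
      = ∑ i ∈ s, a i * (x ^ e i - 1 - e i * (x - 1)) := by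
    simp only [sum_mul, ← sum_sub_distrib]
    exact sum_congr rfl fun i _ ↦ by ring
  rw [hsum]
  exact dvd_sum fun i _ ↦ dvd_mul_of_dvd_right (sub_one_sq_dvd_pow_sub_one_sub_mul _ _) _

theorem dvd_sum_pow_mul_pow_sub_of_mul_eq_one {u v a d : R} (huv : u * v = 1)
    (hd : d ∣ v - a) (n : ℕ) :
    d ∣ ∑ j ∈ range n, u ^ j * a ^ j - n := by
  have hsum : ∑ j ∈ range n, u ^ j * a ^ j - n = -∑ j ∈ range n, u ^ j * (v ^ j - a ^ j) := by
    simp only [mul_sub, ← mul_pow, huv, one_pow, sum_sub_distrib, sum_const, card_range,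
      nsmul_eq_mul, mul_one]
    ring
  rw [hsum]
  exact (dvd_sum fun j _ ↦ (hd.trans (sub_dvd_pow_sub_pow v a j)).mul_left _).neg_right

theorem dvd_and_not_sq_dvd_of_sq_dvd_sub_mul [IsDomain R] {t w c : R} (ht0 : t ≠ 0)
    (ht : ¬IsUnit t) (hc : IsUnit c) (h : t ^ 2 ∣ w - c * t) :
    t ∣ w ∧ ¬t ^ 2 ∣ w := by
  refine ⟨?_, fun hw ↦ ht (isUnit_of_dvd_unit ?_ hc)⟩
  · have : w = (w - c * t) + c * t := by ring
    rw [this]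
    exact dvd_add ((dvd_pow_self t two_ne_zero).trans h) (dvd_mul_left t c)
  · have hct : t * t ∣ t * c := by
      rw [← sq, mul_comm]
      simpa using dvd_sub hw h
    exact (mul_dvd_mul_iff_left ht0).mp hct

end

theorem stmt_11_general (p m r : ℕ) [Fact p.Prime]
    (hm1 : 1 < m)
    (R : Type) [CommRing R] [IsDomain R]
    (ζ : R) (hζ : IsPrimitiveRoot ζ p) (hζnu : ¬ IsUnit (ζ - 1))
    (ξ : Rˣ) (hξ : IsPrimitiveRoot (ξ : R) m)
    (hξr : (p : R) ∣ (ξ : R) - (r : R)) (hmu : IsUnit (m : R))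
    (w : R) (hw : w = ∑ j ∈ Finset.range m, ((ξ ^ (-(j : ℤ)) : Rˣ) : R) * ζ ^ (r ^ j)) :
    (ζ - 1) ^ 2 ∣ (w - (m : R) * (ζ - 1)) ∧
    (ζ - 1) ∣ w ∧ ¬ (ζ - 1) ^ 2 ∣ w := by
  have hp1 : 1 < p := (Fact.out : p.Prime).one_lt
  set u : R := ((ξ⁻¹ : Rˣ) : R)
  have hu : IsPrimitiveRoot u m :=
    IsPrimitiveRoot.coe_units_iff.mpr (IsPrimitiveRoot.coe_units_iff.mp hξ).inv
  have hw' : w = ∑ j ∈ range m, u ^ j * ζ ^ (r ^ j) := by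
    simp only [hw, zpow_neg, zpow_natCast, ← inv_pow, Units.val_pow_eq_pow_val, u]
  have hlin := sub_one_sq_dvd_sum_mul_pow_sub (range m) (u ^ ·) (r ^ ·) ζ
  have hgeom : ∑ j ∈ range m, u ^ j = 0 := hu.geom_sum_eq_zero hm1
  have hcoeff : ζ - 1 ∣ ∑ j ∈ range m, u ^ j * (r : R) ^ j - m :=
    (hζ.sub_one_dvd_natCast hp1).trans
      (dvd_sum_pow_mul_pow_sub_of_mul_eq_one (Units.inv_mul ξ) hξr m)
  have hcong : (ζ - 1) ^ 2 ∣ w - m * (ζ - 1) := by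
    have hsplit := dvd_add hlin (sq (ζ - 1) ▸ mul_dvd_mul_left (ζ - 1) hcoeff)
    push_cast [hgeom] at hsplit
    convert hsplit using 1
    rw [hw']
    ring
  exact ⟨hcong,
    dvd_and_not_sq_dvd_of_sq_dvd_sub_mul (sub_ne_zero.mpr (hζ.ne_one hp1)) hζnu hmu hcong⟩

theorem stmt_11 (p m r : ℕ) [Fact p.Prime] (hp : Odd p)
    (hm : m ∣ p - 1) (hm1 : 1 < m) (hr : orderOf (r : ZMod p) = m)
    (R : Type) [CommRing R] [IsDomain R]
    (ζ : R) (hζ : IsPrimitiveRoot ζ p) (hζnu : ¬ IsUnit (ζ - 1))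
    (ξ : Rˣ) (hξ : IsPrimitiveRoot (ξ : R) m)
    (hξr : (p : R) ∣ (ξ : R) - (r : R)) (hmu : IsUnit (m : R))
    (w : R) (hw : w = ∑ j ∈ Finset.range m, ((ξ ^ (-(j : ℤ)) : Rˣ) : R) * ζ ^ (r ^ j)) :
    (ζ - 1) ^ 2 ∣ (w - (m : R) * (ζ - 1)) ∧
    (ζ - 1) ∣ w ∧ ¬ (ζ - 1) ^ 2 ∣ w :=
  stmt_11_general p m r hm1 R ζ hζ hζnu ξ hξ hξr hmu w hw
end

section
/- Let E be an elliptic curve over a local field k with split multiplicative reduction, let K/k be a finite Galois extension with group G, and let q in k be the Tate parameter so that E(K) is G-isomorphic to K^x/q^Z. Let p be an odd prime such that E(K) has finite p-primary torsion. Then the cokernel D of the norm map E(K) p-completed -> E(k) p-completed is isomorphic to the quotient of the p-primary part of k^x/Norm(K^x) by the class of q. -/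
/-!
Tate curve over a local field: `U`, `FixedPoints.subgroup G U`, `ν` and `νE` stand for `K^×`,
`k^× = (K^×)^G`, the norm `N_{K/k}` and the induced norm `E(K) = K^×/q^ℤ → E(k) = k^×/q^ℤ`;
`PComp` is the `p`-adic completion `lim_n A/A^{pⁿ}`.

If `φ : X → Y` has finite cokernel `B`, the completion of `φ` has cokernel the `p`-primary part
`B_p`. With `pᵛ` the `p`-part of `|B|`, the tower `B/B^{pⁿ}` is constant from `n = v` on, so the
completion of `B` is `B/B^{pᵛ} ≅ B_p` and the completion of `Y → B` is onto. An element of `φ(X)`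
that is a `p^{v+n}`-th power in `Y` is the `pⁿ`-th power of an element of `φ(X)`; this lets one lift
a family killed in the completion of `B`, level by level, to a compatible family over `X`. For the
norm `E(K) → E(k)` the cokernel is `k^×/N(K^×)q^ℤ`, whose `p`-primary part is `(k^×/N(K^×))_p`
modulo the class of `q`.
-/

/-- the subgroup of `k`-th powers of a commutative group -/
def powSub (A : Type*) [CommGroup A] (k : ℕ) : Subgroup A := (powMonoidHom k).range

/-- transition maps of the `p`-completion tower `A/A^{p^{n+1}} → A/A^{p^n}` -/
def pTrans (p : ℕ) (A : Type*) [CommGroup A] (n : ℕ) :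
    (A ⧸ powSub A (p ^ (n + 1))) →* (A ⧸ powSub A (p ^ n)) :=
  QuotientGroup.map _ _ (MonoidHom.id A)
    (by
      rintro a ⟨x, rfl⟩
      refine ⟨x ^ p, ?_⟩
      simp only [powMonoidHom_apply, MonoidHom.id_apply, ← pow_mul, pow_succ]
      rw [mul_comm])

/-- the `p`-adic completion `lim_n A/A^{p^n}` of a commutative group `A` -/
def PComp (p : ℕ) (A : Type*) [CommGroup A] : Subgroup (∀ n : ℕ, A ⧸ powSub A (p ^ n)) where
  carrier := {f | ∀ n, pTrans p A n (f (n + 1)) = f n}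
  one_mem' := by intro n; simp
  mul_mem' := by
    intro a b ha hb n
    simp only [Pi.mul_apply, map_mul, ha n, hb n]
  inv_mem' := by
    intro a ha n
    simp only [Pi.inv_apply, map_inv, ha n]

/-- functoriality of the `p`-adic completion -/
def pCompMap (p : ℕ) {A B : Type*} [CommGroup A] [CommGroup B] (φ : A →* B) :
    ↥(PComp p A) →* ↥(PComp p B) where
  toFun f := ⟨fun n => QuotientGroup.map _ _ φ
      (by rintro a ⟨x, rfl⟩; exact ⟨φ x, by simp [powMonoidHom_apply]⟩) (f.1 n), by
    intro n
    have hcomm : ∀ x : A ⧸ powSub A (p ^ (n + 1)),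
        pTrans p B n (QuotientGroup.map _ _ φ
          (by rintro a ⟨x, rfl⟩; exact ⟨φ x, by simp [powMonoidHom_apply]⟩) x) =
        QuotientGroup.map _ _ φ
          (by rintro a ⟨x, rfl⟩; exact ⟨φ x, by simp [powMonoidHom_apply]⟩)
          (pTrans p A n x) := by
      intro x
      induction x using QuotientGroup.induction_on with
      | H a => simp [pTrans, QuotientGroup.map_mk]
    rw [hcomm, f.2 n]⟩
  map_one' := by
    ext n
    simp
  map_mul' f g := by
    ext n
    simp

open QuotientGroup
open scoped Nat

section PowSub

variable {A : Type*} [CommGroup A]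

theorem mem_powSub {k : ℕ} {x : A} : x ∈ powSub A k ↔ ∃ y : A, y ^ k = x := Iff.rfl

theorem powSub_le_of_dvd {a b : ℕ} (h : a ∣ b) : powSub A b ≤ powSub A a := by
  rintro _ ⟨y, rfl⟩
  obtain ⟨c, rfl⟩ := h
  exact ⟨y ^ c, by rw [powMonoidHom_apply, powMonoidHom_apply, ← pow_mul, mul_comm, pow_mul]⟩

end PowSub

section PrimaryComponent

variable {p : ℕ} [hp : Fact p.Prime]

theorem exists_pow_pow_eq_of_mem_primaryComponent {G : Type*} [CommGroup G] {m : ℕ}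
    (hm : ¬ p ∣ m) {x : G} (hx : x ∈ CommGroup.primaryComponent G p) :
    ∃ c : ℕ, (x ^ m) ^ c = x := by
  obtain ⟨j, hj⟩ := CommGroup.mem_primaryComponent_iff_orderOf.mp hx
  apply exists_pow_eq_self_of_coprime
  rw [hj]
  exact (hp.out.coprime_iff_not_dvd.mpr hm).symm.pow_right j

variable {B : Type*} [CommGroup B] [Finite B]

variable (p B) in
theorem not_dvd_ordCompl_card : ¬ p ∣ ordCompl[p] (Nat.card B) :=
  Nat.not_dvd_ordCompl hp.out Nat.card_pos.ne'

theorem pow_ordProj_card_eq_one {x : B} (hx : x ∈ CommGroup.primaryComponent B p) :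
    x ^ ordProj[p] (Nat.card B) = 1 := by
  obtain ⟨j, hj⟩ := CommGroup.mem_primaryComponent_iff_orderOf.mp hx
  apply orderOf_dvd_iff_pow_eq_one.mp
  rw [hj, ← hp.out.pow_dvd_iff_dvd_ordProj (Nat.card_pos (α := B)).ne', ← hj]
  exact orderOf_dvd_natCard x

theorem range_powMonoidHom_ordCompl_card :
    (powMonoidHom (ordCompl[p] (Nat.card B))).range = CommGroup.primaryComponent B p := by
  ext x
  constructor
  · rintro ⟨y, rfl⟩
    refine CommGroup.mem_primaryComponent.mpr ⟨(Nat.card B).factorization p, ?_⟩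
    rw [powMonoidHom_apply, ← pow_mul, mul_comm, Nat.ordProj_mul_ordCompl_eq_self,
      pow_card_eq_one']
  · intro hx
    obtain ⟨c, hc⟩ := exists_pow_pow_eq_of_mem_primaryComponent
      (not_dvd_ordCompl_card p B) hx
    exact ⟨x ^ c, by rw [powMonoidHom_apply, pow_right_comm, hc]⟩

theorem powSub_prime_pow_eq_ker_ordCompl {n : ℕ} (hn : (Nat.card B).factorization p ≤ n) :
    powSub B (p ^ n) = (powMonoidHom (ordCompl[p] (Nat.card B))).ker := by
  ext x
  constructor
  · rintro ⟨y, rfl⟩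
    obtain ⟨c, hc⟩ : Nat.card B ∣ p ^ n * ordCompl[p] (Nat.card B) := by
      conv_lhs => rw [← Nat.ordProj_mul_ordCompl_eq_self (Nat.card B) p]
      exact mul_dvd_mul_right (pow_dvd_pow p hn) _
    rw [MonoidHom.mem_ker, powMonoidHom_apply, powMonoidHom_apply, ← pow_mul, hc, pow_mul,
      pow_card_eq_one', one_pow]
  · intro hx
    have hcop : (p ^ n).Coprime (orderOf x) :=
      ((hp.out.coprime_iff_not_dvd.mpr (not_dvd_ordCompl_card p B)).pow_left
        n).coprime_dvd_right (orderOf_dvd_of_pow_eq_one hx)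
    obtain ⟨c, hc⟩ := exists_pow_eq_self_of_coprime hcop
    exact ⟨x ^ c, by rw [powMonoidHom_apply, pow_right_comm, hc]⟩

end PrimaryComponent

theorem exists_seq_of_exists_succ {α : Type*} {P : ℕ → α → Prop} {R : ℕ → α → α → Prop}
    (h0 : ∃ a, P 0 a) (hsucc : ∀ n a, P n a → ∃ b, P (n + 1) b ∧ R n a b) :
    ∃ s : ℕ → α, ∀ n, P n (s n) ∧ R n (s n) (s (n + 1)) := by
  choose a0 ha0 using h0
  choose next hnext hR using hsucc
  let s : ∀ n, {a // P n a} := fun n => Nat.rec ⟨a0, ha0⟩ (fun n a => ⟨_, hnext n a.1 a.2⟩) n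
  exact ⟨fun n => (s n).1, fun n => ⟨(s n).2, hR n _ (s n).2⟩⟩

namespace PComp

variable (p : ℕ) {A B X Y : Type*} [CommGroup A] [CommGroup B] [CommGroup X] [CommGroup Y]

theorem pTrans_mk (n : ℕ) (x : A) :
    pTrans p A n (x : A ⧸ powSub A (p ^ (n + 1))) = (x : A ⧸ powSub A (p ^ n)) :=
  rfl

variable {p}

theorem mk_eq_of_le (F : PComp p A) {m n : ℕ} (h : n ≤ m) {x : A}
    (hx : (x : A ⧸ powSub A (p ^ m)) = F.1 m) : (x : A ⧸ powSub A (p ^ n)) = F.1 n := by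
  induction m, h using Nat.le_induction with
  | base => exact hx
  | succ k _ ih => exact ih (by rw [← pTrans_mk, hx, F.2 k])

theorem pCompMap_apply (f : A →* B) (F : PComp p A) (n : ℕ) {x : A}
    (hx : (x : A ⧸ powSub A (p ^ n)) = F.1 n) :
    (pCompMap p f F).1 n = (f x : B ⧸ powSub B (p ^ n)) := by
  show QuotientGroup.map _ _ f _ (F.1 n) = _
  rw [← hx]
  rfl

variable (p A) in
def of : A →* PComp p A where
  toFun x := ⟨fun _ => (x : A ⧸ _), fun n => pTrans_mk p n x⟩
  map_one' := rfl
  map_mul' _ _ := rfl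

theorem pCompMap_of (f : A →* B) (x : A) : pCompMap p f (of p A x) = of p B (f x) :=
  Subtype.ext (funext fun n => pCompMap_apply f _ n rfl)

theorem of_eq_one_iff {x : A} : of p A x = 1 ↔ ∀ n, x ∈ powSub A (p ^ n) := by
  simp only [Subtype.ext_iff, funext_iff]
  exact forall_congr' fun n => QuotientGroup.eq_one_iff x

section Finite

variable [Fact p.Prime] [Finite B]

theorem of_surjective : Function.Surjective (of p B) := by
  intro F
  set v := (Nat.card B).factorization p
  obtain ⟨x, hx⟩ := QuotientGroup.mk_surjective (F.1 v)
  refine ⟨x, Subtype.ext (funext fun n => ?_)⟩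
  obtain ⟨y, hy⟩ := QuotientGroup.mk_surjective (F.1 (max n v))
  have hyx : (y : B ⧸ powSub B (p ^ v)) = x := (mk_eq_of_le F (le_max_right n v) hy).trans hx.symm
  rw [QuotientGroup.eq, powSub_prime_pow_eq_ker_ordCompl le_rfl,
    ← powSub_prime_pow_eq_ker_ordCompl (le_max_right n v), ← QuotientGroup.eq] at hyx
  exact mk_eq_of_le F (le_max_left n v) (hyx ▸ hy)

theorem ker_of : (of p B).ker = (powMonoidHom (ordCompl[p] (Nat.card B))).ker := by
  ext x
  rw [MonoidHom.mem_ker, of_eq_one_iff]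
  refine ⟨fun h => powSub_prime_pow_eq_ker_ordCompl (p := p) (B := B) le_rfl ▸ h _, fun h n => ?_⟩
  rw [← powSub_prime_pow_eq_ker_ordCompl (le_max_right n _)] at h
  exact powSub_le_of_dvd (pow_dvd_pow p (le_max_left n _)) h

variable (p B) in
noncomputable def equivPrimaryComponent : PComp p B ≃* CommGroup.primaryComponent B p :=
  (quotientKerEquivOfSurjective _ of_surjective).symm.trans <|
    (quotientMulEquivOfEq ker_of).trans <|
      (quotientKerEquivRange _).trans (MulEquiv.subgroupCongr range_powMonoidHom_ordCompl_card)

end Finite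

section Exact

variable {f : X →* Y} {g : Y →* B}

theorem exists_mk_eq_of_pCompMap_eq_one (hg : Function.Surjective g) (hexact : g.ker = f.range)
    {F : PComp p Y} (hF : pCompMap p g F = 1) (n : ℕ) :
    ∃ x : X, (f x : Y ⧸ powSub Y (p ^ n)) = F.1 n := by
  obtain ⟨y, hy⟩ := QuotientGroup.mk_surjective (F.1 n)
  have hgy : g y ∈ powSub B (p ^ n) := by
    rw [← QuotientGroup.eq_one_iff, ← pCompMap_apply g F n hy, hF]
    rfl
  obtain ⟨b, hb⟩ := hgy
  obtain ⟨w, rfl⟩ := hg b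
  obtain ⟨x, hx⟩ : y * (w ^ p ^ n)⁻¹ ∈ f.range := by
    rw [← hexact, MonoidHom.mem_ker, map_mul, map_inv, map_pow, ← powMonoidHom_apply, hb,
      mul_inv_cancel]
  refine ⟨x, hy ▸ QuotientGroup.eq.mpr ?_⟩
  rw [hx, mul_inv_rev, inv_inv, inv_mul_cancel_right]
  exact ⟨w, rfl⟩

variable [Fact p.Prime] [Finite B]

theorem exists_pow_eq_of_mem_range_of_mem_powSub (hexact : g.ker = f.range) {n : ℕ} {d : Y}
    (hd : d ∈ f.range) (hdp : d ∈ powSub Y (p ^ ((Nat.card B).factorization p + n))) :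
    ∃ t : X, f t ^ p ^ n = d := by
  obtain ⟨w, rfl⟩ := hdp
  have hgw : g w ∈ CommGroup.primaryComponent B p := by
    refine CommGroup.mem_primaryComponent.mpr ⟨(Nat.card B).factorization p + n, ?_⟩
    rw [← map_pow, ← powMonoidHom_apply, ← MonoidHom.mem_ker, hexact]
    exact hd
  obtain ⟨t, ht⟩ : w ^ ordProj[p] (Nat.card B) ∈ f.range := by
    rw [← hexact, MonoidHom.mem_ker, map_pow, pow_ordProj_card_eq_one hgw]
  exact ⟨t, by rw [ht, powMonoidHom_apply, pow_add, pow_mul]⟩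

theorem exists_lift_succ (hg : Function.Surjective g) (hexact : g.ker = f.range)
    {F : PComp p Y} (hF : pCompMap p g F = 1) {n : ℕ} {x : X}
    (hx : (f x : Y ⧸ powSub Y (p ^ ((Nat.card B).factorization p + n))) =
      F.1 ((Nat.card B).factorization p + n)) :
    ∃ x' : X, (f x' : Y ⧸ powSub Y (p ^ ((Nat.card B).factorization p + (n + 1)))) =
        F.1 ((Nat.card B).factorization p + (n + 1)) ∧
      (x' : X ⧸ powSub X (p ^ n)) = x := by
  obtain ⟨z, hz⟩ := exists_mk_eq_of_pCompMap_eq_one hg hexact hF _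
  have hxz : (f x)⁻¹ * f z ∈ powSub Y (p ^ ((Nat.card B).factorization p + n)) :=
    QuotientGroup.eq.mp (hx.trans (mk_eq_of_le F (Nat.add_le_add_left n.le_succ _) hz).symm)
  obtain ⟨t, ht⟩ := exists_pow_eq_of_mem_range_of_mem_powSub hexact
    (f.range.mul_mem (f.range.inv_mem ⟨x, rfl⟩) ⟨z, rfl⟩) hxz
  refine ⟨x * t ^ p ^ n, ?_, (QuotientGroup.eq.mpr ?_).symm⟩
  · rw [map_mul, map_pow, ht, mul_inv_cancel_left, hz]
  · exact mem_powSub.mpr ⟨t, (inv_mul_cancel_left x _).symm⟩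

theorem ker_pCompMap_eq_range (hg : Function.Surjective g) (hexact : g.ker = f.range) :
    (pCompMap p g).ker = (pCompMap p f).range := by
  refine le_antisymm (fun F hF => ?_) ?_
  · obtain ⟨s, hs⟩ := exists_seq_of_exists_succ
      (P := fun n x => (f x : Y ⧸ powSub Y (p ^ ((Nat.card B).factorization p + n))) =
        F.1 ((Nat.card B).factorization p + n))
      (R := fun n x x' => (x' : X ⧸ powSub X (p ^ n)) = x)
      (exists_mk_eq_of_pCompMap_eq_one hg hexact hF _)
      (fun _ _ hx => exists_lift_succ hg hexact hF hx)
    refine ⟨⟨fun n => (s n : X ⧸ powSub X (p ^ n)), fun n => (hs n).2⟩,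
      Subtype.ext (funext fun n => ?_)⟩
    rw [pCompMap_apply f _ n rfl]
    exact mk_eq_of_le F (Nat.le_add_left n _) (hs n).1
  · rintro _ ⟨F, rfl⟩
    refine Subtype.ext (funext fun n => ?_)
    obtain ⟨x, hx⟩ := QuotientGroup.mk_surjective (F.1 n)
    rw [pCompMap_apply g _ n (pCompMap_apply f F n hx).symm,
      MonoidHom.mem_ker.mp (hexact.ge ⟨x, rfl⟩)]
    rfl

theorem pCompMap_surjective (hg : Function.Surjective g) :
    Function.Surjective (pCompMap p g) := by
  intro F
  obtain ⟨b, rfl⟩ := of_surjective F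
  obtain ⟨y, rfl⟩ := hg b
  exact ⟨of p Y y, pCompMap_of g y⟩

noncomputable def quotientRangePCompMapEquiv (hg : Function.Surjective g)
    (hexact : g.ker = f.range) :
    PComp p Y ⧸ (pCompMap p f).range ≃* CommGroup.primaryComponent B p :=
  (quotientMulEquivOfEq (ker_pCompMap_eq_range hg hexact).symm).trans <|
    (quotientKerEquivOfSurjective _ (pCompMap_surjective hg)).trans (equivPrimaryComponent p B)

end Exact

end PComp

section PrimaryComponentQuotient

variable (p : ℕ) [Fact p.Prime] {G H : Type*} [CommGroup G] [CommGroup H]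

def primaryComponentMap (f : G →* H) :
    CommGroup.primaryComponent G p →* CommGroup.primaryComponent H p :=
  (f.domRestrict _).codRestrict _ fun x =>
    let ⟨k, hk⟩ := CommGroup.mem_primaryComponent.mp x.2
    CommGroup.mem_primaryComponent.mpr ⟨k, by rw [MonoidHom.domRestrict_apply, ← map_pow, hk,
      map_one]⟩

theorem primaryComponentMap_mk'_surjective [Finite G] (N : Subgroup G) :
    Function.Surjective (primaryComponentMap p (mk' N)) := by
  rintro ⟨γ, hγ⟩
  obtain ⟨x, rfl⟩ := QuotientGroup.mk_surjective γ
  obtain ⟨c, hc⟩ := exists_pow_pow_eq_of_mem_primaryComponent (not_dvd_ordCompl_card p G) hγ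
  have hx : (x ^ ordCompl[p] (Nat.card G)) ^ c ∈ CommGroup.primaryComponent G p :=
    pow_mem (range_powMonoidHom_ordCompl_card.le ⟨x, rfl⟩) c
  refine ⟨⟨_, hx⟩, Subtype.ext ?_⟩
  show mk' N ((x ^ _) ^ c) = _
  rwa [map_pow, map_pow]

noncomputable def primaryComponentQuotientEquiv [Finite G] (N : Subgroup G) :
    CommGroup.primaryComponent G p ⧸ N.subgroupOf (CommGroup.primaryComponent G p) ≃*
      CommGroup.primaryComponent (G ⧸ N) p :=
  (quotientMulEquivOfEq (by rw [primaryComponentMap, MonoidHom.ker_codRestrict,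
      MonoidHom.ker_domRestrict, ker_mk'])).trans <|
    quotientKerEquivOfSurjective _ (primaryComponentMap_mk'_surjective p N)

end PrimaryComponentQuotient

theorem QuotientGroup.ker_map_mk'_eq_map {G : Type*} [CommGroup G] {M N : Subgroup G}
    {N' : Subgroup (G ⧸ M)}
    (hN' : N.map (mk' M) = N') (h : N ≤ N'.comap (mk' M)) :
    (QuotientGroup.map N N' (mk' M) h).ker = M.map (mk' N) := by
  rw [ker_map, ← hN', Subgroup.comap_map_eq, ker_mk', Subgroup.map_sup, map_mk'_self, bot_sup_eq]

theorem stmt_19_general (p : ℕ) [Fact p.Prime]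
    (G : Type) [Group G]
    (U : Type) [CommGroup U] [MulDistribMulAction G U]
    -- the Tate parameter: G-fixed, of infinite order
    (q : U)
    (qf : ↥(FixedPoints.subgroup G U))
    -- the norm map ν : U → U^G, x ↦ ∏ g • x
    (ν : U →* ↥(FixedPoints.subgroup G U))
    -- the induced norm on E(K) = U/⟨q⟩ with values in E(k) = U^G/⟨q⟩
    (νE : (U ⧸ Subgroup.zpowers q) →*
      (↥(FixedPoints.subgroup G U) ⧸ Subgroup.zpowers qf))
    (hνE : ∀ x : U, νE ((QuotientGroup.mk' (Subgroup.zpowers q)) x) =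
      (QuotientGroup.mk' (Subgroup.zpowers qf)) (ν x))
    -- local class field theory: `k^×/N(K^×)` is finite
    (hfin : Finite (↥(FixedPoints.subgroup G U) ⧸ ν.range)) :
    -- D = coker of the norm on p-adic completions ≅
    --   (p-primary part of U^G/ν(U)) ⧸ ⟨class of q⟩
    Nonempty (
      ((↥(PComp p (↥(FixedPoints.subgroup G U) ⧸ Subgroup.zpowers qf))) ⧸
          (pCompMap p νE).range) ≃*
      (↥(CommGroup.primaryComponent (↥(FixedPoints.subgroup G U) ⧸ ν.range) p) ⧸
        ((Subgroup.zpowers ((QuotientGroup.mk' ν.range) qf)).subgroupOf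
          (CommGroup.primaryComponent (↥(FixedPoints.subgroup G U) ⧸ ν.range) p)))) := by
  have hq : (Subgroup.zpowers qf).map (mk' ν.range) = Subgroup.zpowers (mk' ν.range qf) :=
    MonoidHom.map_zpowers _ _
  let π := QuotientGroup.map _ _ (mk' ν.range) (Subgroup.map_le_iff_le_comap.mp hq.le)
  have hπ : Function.Surjective π :=
    map_surjective_of_surjective _ _ _ (mk_surjective.comp mk_surjective) _
  have hrange : νE.range = ν.range.map (mk' (Subgroup.zpowers qf)) := by
    rw [← MonoidHom.range_comp, ← (MonoidHom.ext hνE : νE.comp (mk' _) = (mk' _).comp ν),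
      MonoidHom.range_comp, range_mk', ← MonoidHom.range_eq_map]
  have hexact : π.ker = νE.range := by rw [ker_map_mk'_eq_map hq, hrange]
  exact ⟨(PComp.quotientRangePCompMapEquiv hπ hexact).trans
    (primaryComponentQuotientEquiv p _).symm⟩

theorem stmt_19 (p : ℕ) [Fact p.Prime] (hp : Odd p)
    (G : Type) [Group G] [Fintype G]
    (U : Type) [CommGroup U] [MulDistribMulAction G U]
    -- the Tate parameter: G-fixed, of infinite order
    (q : U) (hq : ∀ g : G, g • q = q) (hqord : ∀ n : ℕ, 0 < n → q ^ n ≠ 1)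
    (qf : ↥(FixedPoints.subgroup G U)) (hqf : (qf : U) = q)
    -- the norm map ν : U → U^G, x ↦ ∏ g • x
    (ν : U →* ↥(FixedPoints.subgroup G U))
    (hν : ∀ x : U, (ν x : U) = ∏ g : G, g • x)
    -- the induced norm on E(K) = U/⟨q⟩ with values in E(k) = U^G/⟨q⟩
    (νE : (U ⧸ Subgroup.zpowers q) →*
      (↥(FixedPoints.subgroup G U) ⧸ Subgroup.zpowers qf))
    (hνE : ∀ x : U, νE ((QuotientGroup.mk' (Subgroup.zpowers q)) x) =
      (QuotientGroup.mk' (Subgroup.zpowers qf)) (ν x))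
    -- `E(K)` has finite p-primary torsion
    (htors : Finite ↥(CommGroup.primaryComponent (U ⧸ Subgroup.zpowers q) p))
    -- local class field theory: `k^×/N(K^×)` is finite
    (hfin : Finite (↥(FixedPoints.subgroup G U) ⧸ ν.range)) :
    -- D = coker of the norm on p-adic completions ≅
    --   (p-primary part of U^G/ν(U)) ⧸ ⟨class of q⟩
    Nonempty (
      ((↥(PComp p (↥(FixedPoints.subgroup G U) ⧸ Subgroup.zpowers qf))) ⧸
          (pCompMap p νE).range) ≃*
      (↥(CommGroup.primaryComponent (↥(FixedPoints.subgroup G U) ⧸ ν.range) p) ⧸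
        ((Subgroup.zpowers ((QuotientGroup.mk' ν.range) qf)).subgroupOf
          (CommGroup.primaryComponent (↥(FixedPoints.subgroup G U) ⧸ ν.range) p)))) :=
  stmt_19_general p G U q qf ν νE hνE hfin
end
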